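/- arXiv:2508.07962 — 12 statements merged into one kernel-verified Lean document; each statement's English description precedes it below -/
import Mathlib

section
/- Let L > 0 and define f_L : ℝ → ℝ by f_L(s) = -s/L + √((s/L)² + 1). Then the function A(τ) := 2·arctan(f_L(τ)) is differentiable on ℝ, satisfies 0 < A(τ) < π for all τ, A(0) = π/2, the differential equation A'(τ) = -(1/L)·(sin(A(τ)))² for all τ ∈ ℝ, and moreover lim_{τ→-∞} A(τ) = π and lim_{τ→+∞} A(τ) = 0. -/
open Real Filter

/-- Explicit solution of the effective equation of motion for the connection `Ā₁`
in loop quantum Kaluza–Klein cosmology: with `f_L(s) = -s/L + √((s/L)² + 1)` and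
`A(τ) = 2 arctan (f_L τ)`, the function `A` is differentiable, takes values in `(0, π)`,
satisfies `A 0 = π/2`, solves `A' = -(1/L) sin²(A)`, and tends to `π` at `-∞` and `0` at `+∞`. -/
theorem stmt0 (L : ℝ) (hL : 0 < L)
    (A : ℝ → ℝ)
    (hA : ∀ τ : ℝ, A τ = 2 * Real.arctan (-τ/L + Real.sqrt ((τ/L)^2 + 1))) :
    Differentiable ℝ A ∧
    (∀ τ : ℝ, 0 < A τ ∧ A τ < Real.pi) ∧
    A 0 = Real.pi / 2 ∧
    (∀ τ : ℝ, HasDerivAt A (-(1/L) * (Real.sin (A τ))^2) τ) ∧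
    Filter.Tendsto A Filter.atBot (nhds Real.pi) ∧
    Filter.Tendsto A Filter.atTop (nhds 0) := by
  have hAe : A = fun τ => 2 * Real.arctan (-τ/L + Real.sqrt ((τ/L)^2 + 1)) := funext hA
  subst hAe
  have hL0 : L ≠ 0 := hL.ne'
  set g : ℝ → ℝ := fun τ => -τ/L + Real.sqrt ((τ/L)^2 + 1) with hg
  have hrpos : ∀ τ : ℝ, (0:ℝ) < Real.sqrt ((τ/L)^2 + 1) := fun τ =>
    Real.sqrt_pos.mpr (by positivity)
  have hrsq : ∀ τ : ℝ, (Real.sqrt ((τ/L)^2 + 1))^2 = (τ/L)^2 + 1 := fun τ =>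
    Real.sq_sqrt (by positivity)
  have hur : ∀ τ : ℝ, τ/L < Real.sqrt ((τ/L)^2 + 1) := by
    intro τ
    have h1 : τ/L ≤ |τ/L| := le_abs_self _
    have h2 : |τ/L| < Real.sqrt ((τ/L)^2 + 1) := by
      rw [← Real.sqrt_sq_eq_abs]
      exact Real.sqrt_lt_sqrt (by positivity) (by linarith)
    linarith
  have hgpos : ∀ τ : ℝ, 0 < g τ := by
    intro τ
    have := hur τ
    simp only [hg, neg_div]
    linarith
  have hgeq : ∀ τ : ℝ, g τ = -(τ/L) + Real.sqrt ((τ/L)^2 + 1) := by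
    intro τ; simp [hg, neg_div]
  have key : ∀ τ : ℝ, 1 + g τ ^ 2 = 2 * Real.sqrt ((τ/L)^2 + 1) * g τ := by
    intro τ
    rw [hgeq τ]
    linear_combination - hrsq τ
  -- sin of A
  have hsin : ∀ τ : ℝ, Real.sin (2 * Real.arctan (g τ)) = 1 / Real.sqrt ((τ/L)^2 + 1) := by
    intro τ
    set r := Real.sqrt ((τ/L)^2 + 1) with hr
    rw [Real.sin_two_mul, Real.sin_arctan, Real.cos_arctan]
    set s := Real.sqrt (1 + g τ ^ 2) with hsdef
    have hs : s * s = 1 + g τ ^ 2 := Real.mul_self_sqrt (by positivity)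
    have h1 : 2 * (g τ / s) * (1 / s) = 2 * g τ / (s * s) := by ring
    rw [h1, hs, key τ]
    have hd : 2 * r * g τ ≠ 0 := (mul_pos (mul_pos two_pos (hrpos τ)) (hgpos τ)).ne'
    rw [div_eq_div_iff hd (hrpos τ).ne']
    ring
  -- derivative
  have hderiv : ∀ τ : ℝ, HasDerivAt (fun τ => 2 * Real.arctan (g τ))
      (-(1/L) * (Real.sin (2 * Real.arctan (g τ)))^2) τ := by
    intro τ
    have h1 : HasDerivAt (fun s : ℝ => -s/L) (-1/L) τ := by
      simpa using ((hasDerivAt_id τ).neg.div_const L)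
    have h2 : HasDerivAt (fun s : ℝ => (s/L)^2 + 1) (2 * (τ/L) * (1/L)) τ := by
      have := (((hasDerivAt_id τ).div_const L).pow 2).add_const 1
      simpa [mul_comm, mul_assoc, mul_left_comm] using this
    have h3 : HasDerivAt (fun s : ℝ => Real.sqrt ((s/L)^2 + 1))
        (2 * (τ/L) * (1/L) / (2 * Real.sqrt ((τ/L)^2 + 1))) τ :=
      h2.sqrt (by positivity)
    have h4 : HasDerivAt g (-1/L + 2 * (τ/L) * (1/L) / (2 * Real.sqrt ((τ/L)^2 + 1))) τ :=
      h1.add h3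
    have h5 := (h4.arctan).const_mul 2
    refine h5.congr_deriv ?_
    rw [hsin τ, key τ, hgeq τ]
    set u := τ/L with hu
    set r := Real.sqrt ((τ/L)^2 + 1) with hr
    have hrp : 0 < r := hrpos τ
    have hru : u < r := hur τ
    have hgne : -u + r ≠ 0 := by linarith
    field_simp
    ring
  refine ⟨fun τ => (hderiv τ).differentiableAt, ?_, ?_, hderiv, ?_, ?_⟩
  · intro τ
    have h1 : 0 < Real.arctan (g τ) := by
      rw [← Real.arctan_zero]
      exact Real.arctan_strictMono (hgpos τ)
    have h2 : Real.arctan (g τ) < Real.pi / 2 := Real.arctan_lt_pi_div_two _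
    constructor <;> simp only [hg] <;> linarith
  · norm_num [Real.arctan_one]
    ring
  · -- atBot
    have hneg : Tendsto (fun τ : ℝ => -τ/L) atBot atTop := by
      have : Tendsto (fun τ : ℝ => -τ) atBot atTop := tendsto_neg_atBot_atTop
      exact this.atTop_div_const hL
    have hgtop : Tendsto g atBot atTop := by
      refine tendsto_atTop_mono (fun τ => ?_) hneg
      have := Real.sqrt_nonneg ((τ/L)^2 + 1)
      simp only [hg]; linarith
    have harc : Tendsto (fun τ => Real.arctan (g τ)) atBot (nhds (Real.pi / 2)) :=
      (Real.tendsto_arctan_atTop.mono_right nhdsWithin_le_nhds).comp hgtop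
    have h2 := harc.const_mul 2
    have h3 : (2:ℝ) * (Real.pi / 2) = Real.pi := by ring
    rw [h3] at h2
    exact h2
  · -- atTop
    have hginv : ∀ τ : ℝ, g τ = (τ/L + Real.sqrt ((τ/L)^2 + 1))⁻¹ := by
      intro τ
      refine eq_inv_of_mul_eq_one_left ?_
      rw [hgeq τ]
      linear_combination hrsq τ
    have hsumtop : Tendsto (fun τ : ℝ => τ/L + Real.sqrt ((τ/L)^2 + 1)) atTop atTop := by
      refine tendsto_atTop_mono (fun τ => ?_) (tendsto_id.atTop_div_const hL)
      have := Real.sqrt_nonneg ((τ/L)^2 + 1)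
      simp only [id]
      linarith
    have hg0 : Tendsto g atTop (nhds 0) := by
      rw [funext hginv]
      exact tendsto_inv_atTop_zero.comp hsumtop
    have harc : Tendsto (fun τ => Real.arctan (g τ)) atTop (nhds 0) := by
      have := (Real.continuous_arctan.tendsto 0).comp hg0
      simpa [Function.comp_def] using this
    simpa using harc.const_mul 2
end

section
/- Let ε₀ > 0, L > 0, set d₀ = √(1 + 2ε₀²) and k = √2·ε₀·d₀/L. Then the function A(τ) := -arctan((√2·ε₀/d₀)·tan(kτ)), defined on the open interval (-π/(2k), π/(2k)), is differentiable, satisfies A(0) = 0, and satisfies the differential equation A'(τ) = -(1/L)·(2ε₀² + (sin A(τ))²) for all τ in that interval. -/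
/-- Explicit solution (for `n = 0`) of the effective equation of motion with constant
Gaussian spread `ε₀`: with `d₀ = √(1 + 2ε₀²)` and `k = √2 ε₀ d₀ / L`, the function
`A(τ) = -arctan((√2 ε₀ / d₀) tan (kτ))` on `(-π/(2k), π/(2k))` satisfies `A 0 = 0` and
`A' = -(1/L)(2ε₀² + sin²(A))` there (in particular it is differentiable there). -/
theorem stmt1 (ε₀ L : ℝ) (hε₀ : 0 < ε₀) (hL : 0 < L)
    (d₀ k : ℝ) (hd₀ : d₀ = Real.sqrt (1 + 2*ε₀^2)) (hk : k = Real.sqrt 2 * ε₀ * d₀ / L)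
    (A : ℝ → ℝ)
    (hA : ∀ τ : ℝ, A τ = -Real.arctan ((Real.sqrt 2 * ε₀ / d₀) * Real.tan (k * τ))) :
    A 0 = 0 ∧
    ∀ τ ∈ Set.Ioo (-(Real.pi/(2*k))) (Real.pi/(2*k)),
      HasDerivAt A (-(1/L) * (2*ε₀^2 + (Real.sin (A τ))^2)) τ := by
  have h1 : (0:ℝ) < 1 + 2*ε₀^2 := by positivity
  have hd2 : d₀^2 = 1 + 2*ε₀^2 := by rw [hd₀]; exact Real.sq_sqrt h1.le
  have hdpos : 0 < d₀ := by rw [hd₀]; positivity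
  have hs2 : Real.sqrt 2 ^ 2 = 2 := Real.sq_sqrt (by norm_num)
  have hs2pos : (0:ℝ) < Real.sqrt 2 := by positivity
  have hkpos : 0 < k := by rw [hk]; positivity
  obtain ⟨c, hc⟩ : ∃ c : ℝ, c = Real.sqrt 2 * ε₀ / d₀ := ⟨_, rfl⟩
  simp only [← hc] at hA
  constructor
  · rw [hA]; simp
  · intro τ hτ
    have hkt : k * τ ∈ Set.Ioo (-(Real.pi/2)) (Real.pi/2) := by
      obtain ⟨h1', h2'⟩ := hτ
      constructor
      · have := (mul_lt_mul_iff_right₀ hkpos).2 h1'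
        calc -(Real.pi/2) = k * (-(Real.pi/(2*k))) := by field_simp
          _ < k * τ := (mul_lt_mul_iff_right₀ hkpos).2 h1'
      · calc k * τ < k * (Real.pi/(2*k)) := (mul_lt_mul_iff_right₀ hkpos).2 h2'
          _ = Real.pi/2 := by field_simp
    have hcos : Real.cos (k * τ) ≠ 0 :=
      (Real.cos_pos_of_mem_Ioo hkt).ne'
    set t : ℝ := Real.tan (k * τ) with ht
    have htan : HasDerivAt (fun τ => Real.tan (k * τ)) (1 / Real.cos (k*τ)^2 * k) τ :=
      (Real.hasDerivAt_tan hcos).comp τ (by simpa using (hasDerivAt_id τ).const_mul k)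
    have hderiv : HasDerivAt A
        (-((1 + (c * t)^2)⁻¹ * (c * (1 / Real.cos (k*τ)^2 * k)))) τ := by
      have := ((Real.hasDerivAt_arctan (c * t)).comp τ (htan.const_mul c)).neg
      have hAeq : A = fun τ => -Real.arctan (c * Real.tan (k * τ)) := funext hA
      rw [hAeq]
      simpa [Function.comp_def, Pi.neg_def] using this
    convert hderiv using 1
    have hsin : Real.sin (A τ) ^ 2 = (c*t)^2 / (1 + (c*t)^2) := by
      rw [hA τ, Real.sin_neg, neg_sq, Real.sin_arctan, div_pow,
        Real.sq_sqrt (by positivity : (0:ℝ) ≤ 1 + (c*t)^2)]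
    have hinv : 1 / Real.cos (k*τ)^2 = 1 + t^2 := by
      rw [ht, Real.tan_eq_sin_div_cos, div_pow]
      field_simp
      exact (Real.cos_sq_add_sin_sq _).symm
    have hden : (1 : ℝ) + (c*t)^2 ≠ 0 := by positivity
    have hd0 : d₀ ≠ 0 := hdpos.ne'
    have hck : c * k = 2*ε₀^2 / L := by
      rw [hc, hk]; field_simp; linear_combination hs2
    have hc2 : c^2 * (1 + 2*ε₀^2) = 2*ε₀^2 := by
      rw [hc, ← hd2]; field_simp; linear_combination hs2
    have hck' : c * k * L = 2*ε₀^2 := by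
      rw [hck]; field_simp
    rw [hsin, hinv]
    field_simp
    linear_combination (1+t^2)*hck' - t^2*hc2
end

section
/- Let I ⊆ ℝ be an interval, μ ≠ 0, L > 0, and let g : I → ℝ be continuous. Suppose A_y, P : I → ℝ are differentiable and satisfy A_y'(τ) = -(3/(2L))·g(τ)·sin(μ·A_y(τ))/μ and P'(τ) = (3/(2L))·g(τ)·cos(μ·A_y(τ))·P(τ) for all τ ∈ I. Then the function τ ↦ P(τ)·sin(μ·A_y(τ)) is constant on I. -/
/-- The quantity `Ō = π^y sin(μ_y Ā_y)/μ_y` is a Dirac observable: if on an interval `I`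
the functions `A_y` and `P` satisfy `A_y' = -(3/(2L)) g sin(μ A_y)/μ` and
`P' = (3/(2L)) g cos(μ A_y) P` with `g` continuous, then `P sin(μ A_y)` is constant on `I`. -/
theorem stmt2 (I : Set ℝ) (hI : I.OrdConnected)
    (μ L : ℝ) (hμ : μ ≠ 0) (hL : 0 < L)
    (g A_y P : ℝ → ℝ) (hg : ContinuousOn g I)
    (hAy : ∀ τ ∈ I, HasDerivWithinAt A_y (-(3/(2*L)) * g τ * Real.sin (μ * A_y τ) / μ) I τ)
    (hP : ∀ τ ∈ I, HasDerivWithinAt P ((3/(2*L)) * g τ * Real.cos (μ * A_y τ) * P τ) I τ) :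
    ∀ τ₁ ∈ I, ∀ τ₂ ∈ I,
      P τ₁ * Real.sin (μ * A_y τ₁) = P τ₂ * Real.sin (μ * A_y τ₂) := by
  intro τ₁ h₁ τ₂ h₂
  have hconv : Convex ℝ I := hI.convex
  have hderiv : ∀ τ ∈ I,
      HasDerivWithinAt (fun t => P t * Real.sin (μ * A_y t)) 0 I τ := by
    intro τ hτ
    have hA := (hAy τ hτ).const_mul μ
    have hsin := (Real.hasDerivAt_sin (μ * A_y τ)).comp_hasDerivWithinAt τ hA
    have := (hP τ hτ).mul hsin
    refine this.congr_deriv ?_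
    simp only [Function.comp_apply]
    field_simp
    ring
  have key : ∀ x ∈ I, ∀ y ∈ I,
      ‖(fun t => P t * Real.sin (μ * A_y t)) y -
        (fun t => P t * Real.sin (μ * A_y t)) x‖ ≤ 0 * ‖y - x‖ := by
    intro x hx y hy
    exact hconv.norm_image_sub_le_of_norm_hasDerivWithin_le
      (fun t ht => hderiv t ht) (fun t ht => by simp) hx hy
  have := key τ₁ h₁ τ₂ h₂
  simp only [zero_mul, norm_le_zero_iff, sub_eq_zero] at this
  exact this.symm
end

section
/- Let ε₀ > 0, μ ≠ 0, L > 0, and set d₀ = √(1 + 2ε₀²). Let I ⊆ ℝ be an interval and A, A_y : I → ℝ differentiable functions satisfying A'(τ) = -(1/L)·(2ε₀² + (sin A(τ))²) and A_y'(τ) = -(3/(2L))·sin(A(τ))·sin(μ·A_y(τ))/μ on I, and suppose cos(μ·A_y(τ)/2) ≠ 0 and sin(μ·A_y(τ)) ≠ 0 for all τ ∈ I. Then the function τ ↦ tan(μ·A_y(τ)/2)·((d₀ + cos A(τ))/(d₀ - cos A(τ)))^{3/(4d₀)} is constant on I. -/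
/-- In the constant-spread scenario, the quantity
`F̄ = tan(μ Ā_y/2) ((d₀ + cos Ā₁)/(d₀ - cos Ā₁))^{3/(4d₀)}` is a Dirac observable. -/
theorem stmt3 (ε₀ μ L : ℝ) (hε₀ : 0 < ε₀) (hμ : μ ≠ 0) (hL : 0 < L)
    (d₀ : ℝ) (hd₀ : d₀ = Real.sqrt (1 + 2*ε₀^2))
    (I : Set ℝ) (hI : I.OrdConnected)
    (A A_y : ℝ → ℝ)
    (hA : ∀ τ ∈ I, HasDerivWithinAt A (-(1/L) * (2*ε₀^2 + (Real.sin (A τ))^2)) I τ)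
    (hAy : ∀ τ ∈ I,
      HasDerivWithinAt A_y (-(3/(2*L)) * Real.sin (A τ) * Real.sin (μ * A_y τ) / μ) I τ)
    (hcos : ∀ τ ∈ I, Real.cos (μ * A_y τ / 2) ≠ 0)
    (hsin : ∀ τ ∈ I, Real.sin (μ * A_y τ) ≠ 0) :
    ∀ τ₁ ∈ I, ∀ τ₂ ∈ I,
      Real.tan (μ * A_y τ₁ / 2) *
        ((d₀ + Real.cos (A τ₁)) / (d₀ - Real.cos (A τ₁))) ^ ((3:ℝ)/(4*d₀))
      = Real.tan (μ * A_y τ₂ / 2) *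
        ((d₀ + Real.cos (A τ₂)) / (d₀ - Real.cos (A τ₂))) ^ ((3:ℝ)/(4*d₀)) := by
  have hd₀sq : d₀^2 = 1 + 2*ε₀^2 := by
    rw [hd₀]; exact Real.sq_sqrt (by positivity)
  have hd1 : 1 < d₀ := by
    have hdnn : 0 ≤ d₀ := hd₀ ▸ Real.sqrt_nonneg _
    nlinarith
  set p : ℝ := (3:ℝ)/(4*d₀) with hp
  set F : ℝ → ℝ := fun τ => Real.tan (μ * A_y τ / 2) *
      ((d₀ + Real.cos (A τ)) / (d₀ - Real.cos (A τ))) ^ p with hF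
  have key : ∀ τ ∈ I, HasDerivWithinAt F 0 I τ := by
    intro τ hτ
    have hc1 : 0 < d₀ + Real.cos (A τ) := by nlinarith [Real.neg_one_le_cos (A τ)]
    have hc2 : 0 < d₀ - Real.cos (A τ) := by nlinarith [Real.cos_le_one (A τ)]
    have hfpos : 0 < (d₀ + Real.cos (A τ)) / (d₀ - Real.cos (A τ)) := div_pos hc1 hc2
    have hcA : HasDerivWithinAt (fun t => Real.cos (A t))
        (-Real.sin (A τ) * (-(1/L) * (2*ε₀^2 + (Real.sin (A τ))^2))) I τ :=
      (Real.hasDerivAt_cos (A τ)).comp_hasDerivWithinAt τ (hA τ hτ)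
    have hbase := (hcA.const_add d₀).div (hcA.const_sub d₀) hc2.ne'
    have hrpow := hbase.rpow_const (p := p) (Or.inl hfpos.ne')
    have htin : HasDerivWithinAt (fun t => μ * A_y t / 2)
        (μ * (-(3/(2*L)) * Real.sin (A τ) * Real.sin (μ * A_y τ) / μ) / 2) I τ :=
      ((hAy τ hτ).const_mul μ).div_const 2
    have htan := (Real.hasDerivAt_tan (hcos τ hτ)).comp_hasDerivWithinAt τ htin
    have hD := htan.mul hrpow
    convert hD using 1
    · rfl
    · rfl
    · rfl
    symm
    have h2e : 2*ε₀^2 = d₀^2 - 1 := by linarith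
    have hsinsq : Real.sin (A τ)^2 = 1 - Real.cos (A τ)^2 := Real.sin_sq (A τ)
    have hsdouble : Real.sin (μ * A_y τ) =
        2 * Real.sin (μ * A_y τ / 2) * Real.cos (μ * A_y τ / 2) := by
      have h := Real.sin_two_mul (μ * A_y τ / 2)
      rw [show 2 * (μ * A_y τ / 2) = μ * A_y τ by ring] at h
      exact h
    have hfrw : ((d₀ + Real.cos (A τ)) / (d₀ - Real.cos (A τ))) ^ (p - 1)
        = ((d₀ + Real.cos (A τ)) / (d₀ - Real.cos (A τ))) ^ p /
          ((d₀ + Real.cos (A τ)) / (d₀ - Real.cos (A τ))) := by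
      rw [Real.rpow_sub hfpos, Real.rpow_one]
    simp only [Function.comp, Pi.div_apply]
    rw [Real.tan_eq_sin_div_cos, hfrw, hsdouble, h2e, hsinsq, hp]
    have hd₀ne : d₀ ≠ 0 := by positivity
    set X : ℝ := ((d₀ + Real.cos (A τ)) / (d₀ - Real.cos (A τ))) ^ p with hX
    rw [div_div_eq_mul_div]
    have hT1 : 1 / Real.cos (μ * A_y τ / 2) ^ 2 *
        (μ * (-(3 / (2 * L)) * Real.sin (A τ) *
          (2 * Real.sin (μ * A_y τ / 2) * Real.cos (μ * A_y τ / 2)) / μ) / 2) * X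
        = -(3 / (2 * L)) * Real.sin (A τ) *
            (Real.sin (μ * A_y τ / 2) / Real.cos (μ * A_y τ / 2)) * X := by
      field_simp [hμ, hL.ne', hcos τ hτ]
    have hT2 : (-Real.sin (A τ) * (-(1 / L) * (d₀ ^ 2 - 1 + (1 - Real.cos (A τ) ^ 2))) *
            (d₀ - Real.cos (A τ)) -
            (d₀ + Real.cos (A τ)) *
              -(-Real.sin (A τ) * (-(1 / L) * (d₀ ^ 2 - 1 + (1 - Real.cos (A τ) ^ 2))))) /
          (d₀ - Real.cos (A τ)) ^ 2 * (3 / (4 * d₀)) *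
          (X * (d₀ - Real.cos (A τ)) / (d₀ + Real.cos (A τ)))
        = 3 / (2 * L) * Real.sin (A τ) * X := by
      field_simp [hL.ne', hc1.ne', hc2.ne', hd₀ne]
      ring
    linear_combination hT1 + (Real.sin (μ * A_y τ / 2) / Real.cos (μ * A_y τ / 2)) * hT2
  have main : ∀ τ₁ ∈ I, ∀ τ₂ ∈ I, τ₁ ≤ τ₂ → F τ₁ = F τ₂ := by
    intro τ₁ h₁ τ₂ h₂ hle
    rcases eq_or_lt_of_le hle with rfl | hlt
    · rfl
    have hsub : Set.Icc τ₁ τ₂ ⊆ I := hI.out h₁ h₂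
    have hdiff : DifferentiableOn ℝ F (Set.Icc τ₁ τ₂) := fun x hx =>
      ((key x (hsub hx)).mono hsub).differentiableWithinAt
    have hderiv : ∀ x ∈ Set.Ico τ₁ τ₂, derivWithin F (Set.Icc τ₁ τ₂) x = 0 := by
      intro x hx
      exact ((key x (hsub (Set.Ico_subset_Icc_self hx))).mono hsub).derivWithin
        (uniqueDiffOn_Icc hlt x (Set.Ico_subset_Icc_self hx))
    exact (constant_of_derivWithin_zero hdiff hderiv τ₂ (Set.right_mem_Icc.2 hle)).symm
  intro τ₁ h₁ τ₂ h₂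
  rcases le_total τ₁ τ₂ with h | h
  · exact main τ₁ h₁ τ₂ h₂ h
  · exact (main τ₂ h₂ τ₁ h₁ h).symm
end

section
/- Let ε₁ ≥ 0, ε₂ ≥ 0, μ ≠ 0, L > 0, and set ν₁ = (1 + 4ε₁)/2. Let I ⊆ ℝ be an interval and A, A_y : I → ℝ differentiable functions satisfying A'(τ) = -(1/L)·(sin A(τ))² and A_y'(τ) = -(3/(2L))·((1+4ε₁)·sin A(τ) + 4ε₂)·sin(μ·A_y(τ))/μ on I, and suppose 0 < A(τ) < π, cos(μ·A_y(τ)/2) ≠ 0 and sin(μ·A_y(τ)) ≠ 0 for all τ ∈ I. Then the function τ ↦ tan(μ·A_y(τ)/2)·e^{6ε₂τ/L}·(tan(A(τ)/2))^{-3ν₁} is constant on I. -/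
/-- In the dynamical-spread scenario, the quantity
`Ē = tan(μ Ā_y/2) e^{6ε₂τ/L} tan(Ā₁/2)^{-3ν₁}` is a Dirac observable. -/
theorem stmt4 (ε₁ ε₂ μ L : ℝ) (hε₁ : 0 ≤ ε₁) (hε₂ : 0 ≤ ε₂) (hμ : μ ≠ 0) (hL : 0 < L)
    (ν₁ : ℝ) (hν₁ : ν₁ = (1 + 4*ε₁)/2)
    (I : Set ℝ) (hI : I.OrdConnected)
    (A A_y : ℝ → ℝ)
    (hA : ∀ τ ∈ I, HasDerivWithinAt A (-(1/L) * (Real.sin (A τ))^2) I τ)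
    (hAy : ∀ τ ∈ I,
      HasDerivWithinAt A_y
        (-(3/(2*L)) * ((1 + 4*ε₁) * Real.sin (A τ) + 4*ε₂) * Real.sin (μ * A_y τ) / μ) I τ)
    (hrange : ∀ τ ∈ I, 0 < A τ ∧ A τ < Real.pi)
    (hcos : ∀ τ ∈ I, Real.cos (μ * A_y τ / 2) ≠ 0)
    (hsin : ∀ τ ∈ I, Real.sin (μ * A_y τ) ≠ 0) :
    ∀ τ₁ ∈ I, ∀ τ₂ ∈ I,
      Real.tan (μ * A_y τ₁ / 2) * Real.exp (6*ε₂*τ₁/L) * (Real.tan (A τ₁ / 2)) ^ (-(3*ν₁))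
      = Real.tan (μ * A_y τ₂ / 2) * Real.exp (6*ε₂*τ₂/L) * (Real.tan (A τ₂ / 2)) ^ (-(3*ν₁)) := by
  intro τ₁ h₁ τ₂ h₂
  set p : ℝ := -(3*ν₁) with hp
  set F : ℝ → ℝ := fun τ =>
    Real.tan (μ * A_y τ / 2) * Real.exp (6*ε₂*τ/L) * (Real.tan (A τ / 2)) ^ p with hF
  have key : ∀ τ ∈ I, HasDerivWithinAt F 0 I τ := by
    intro τ hτ
    obtain ⟨hA0, hAπ⟩ := hrange τ hτ
    have hpi := Real.pi_pos
    have hca : 0 < Real.cos (A τ / 2) :=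
      Real.cos_pos_of_mem_Ioo ⟨by linarith, by linarith⟩
    have hsa : 0 < Real.sin (A τ / 2) :=
      Real.sin_pos_of_pos_of_lt_pi (by linarith) (by linarith)
    have hs : 0 < Real.tan (A τ / 2) := by
      rw [Real.tan_eq_sin_div_cos]; positivity
    -- derivative of inner μ * A_y / 2
    have d1 : HasDerivWithinAt (fun τ => μ * A_y τ / 2)
        (μ * (-(3/(2*L)) * ((1 + 4*ε₁) * Real.sin (A τ) + 4*ε₂) * Real.sin (μ * A_y τ) / μ) / 2)
        I τ := ((hAy τ hτ).const_mul μ).div_const 2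
    have dtan1 : HasDerivWithinAt (fun τ => Real.tan (μ * A_y τ / 2))
        (1 / Real.cos (μ * A_y τ / 2) ^ 2 *
          (μ * (-(3/(2*L)) * ((1 + 4*ε₁) * Real.sin (A τ) + 4*ε₂) * Real.sin (μ * A_y τ) / μ) / 2))
        I τ :=
      (Real.hasDerivAt_tan (hcos τ hτ)).comp_hasDerivWithinAt (h₂ := Real.tan) τ d1
    have dexp : HasDerivWithinAt (fun τ : ℝ => Real.exp (6*ε₂*τ/L)) (Real.exp (6*ε₂*τ/L) * (6*ε₂/L)) I τ := by
      have : HasDerivWithinAt (fun τ : ℝ => 6*ε₂*τ/L) (6*ε₂/L) I τ := by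
        simpa using ((hasDerivWithinAt_id τ I).const_mul (6*ε₂)).div_const L
      simpa [mul_comm] using this.exp
    have d2 : HasDerivWithinAt (fun τ => A τ / 2) (-(1/L) * (Real.sin (A τ))^2 / 2) I τ :=
      (hA τ hτ).div_const 2
    have dtan2 : HasDerivWithinAt (fun τ => Real.tan (A τ / 2))
        (1 / Real.cos (A τ / 2) ^ 2 * (-(1/L) * (Real.sin (A τ))^2 / 2)) I τ :=
      (Real.hasDerivAt_tan hca.ne').comp_hasDerivWithinAt (h₂ := Real.tan) τ d2
    have drpow : HasDerivWithinAt (fun τ => Real.tan (A τ / 2) ^ p)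
        ((1 / Real.cos (A τ / 2) ^ 2 * (-(1/L) * (Real.sin (A τ))^2 / 2)) * p *
          Real.tan (A τ / 2) ^ (p - 1)) I τ :=
      dtan2.rpow_const (Or.inl hs.ne')
    have dF := (dtan1.mul dexp).mul drpow
    convert dF using 1
    · rfl
    · rfl
    · rfl
    -- now show the derivative expression is 0
    have e1 : Real.sin (A τ) = 2 * Real.sin (A τ / 2) * Real.cos (A τ / 2) := by
      rw [← Real.sin_two_mul]; ring_nf
    have e2 : Real.sin (μ * A_y τ) = 2 * Real.sin (μ * A_y τ / 2) * Real.cos (μ * A_y τ / 2) := by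
      rw [← Real.sin_two_mul]; ring_nf
    have e3 : Real.tan (A τ / 2) ^ (p - 1) = Real.tan (A τ / 2) ^ p / Real.tan (A τ / 2) := by
      rw [Real.rpow_sub hs, Real.rpow_one]
    simp only [Pi.mul_apply]
    rw [e1, e2, e3, Real.tan_eq_sin_div_cos, Real.tan_eq_sin_div_cos, hp, hν₁]
    have hch := hcos τ hτ
    field_simp
    ring
  have hconv : Convex ℝ I := hI.convex
  have := Convex.norm_image_sub_le_of_norm_hasDerivWithin_le (C := 0) (f' := fun _ => (0:ℝ)) key
    (fun x _ => by simp) hconv h₁ h₂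
  simp only [mul_zero, zero_mul, norm_le_zero_iff, sub_eq_zero] at this
  exact this.symm
end

section
/- Let L > 0 and define f_L : ℝ → ℝ by f_L(s) = -s/L + √((s/L)² + 1). Let c > 0, α > 0, ν₂ ≥ 0, Ē > 0, Ō > 0, μ > 0, and define t(τ) := Ē·e^{-3ν₂τ}·(f_L(cτ))^α and P(τ) := μ·Ō·(1 + t(τ)²)/(2·t(τ)). Then: (i) t is strictly decreasing and continuous with lim_{τ→-∞} t(τ) = +∞ and lim_{τ→+∞} t(τ) = 0, so there is a unique τ₀ ∈ ℝ with t(τ₀) = 1; (ii) P(τ) ≥ μ·Ō for all τ, with equality if and only if τ = τ₀; (iii) lim_{τ→-∞} P(τ) = +∞ and lim_{τ→+∞} P(τ) = +∞. -/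
open Real Filter

private noncomputable def hfun (x : ℝ) : ℝ := -x + Real.sqrt (x^2+1)

private lemma abs_lt_sqrt' (x : ℝ) : |x| < Real.sqrt (x^2+1) := by
  have h := Real.sqrt_lt_sqrt (sq_nonneg x) (by linarith : x^2 < x^2+1)
  rwa [Real.sqrt_sq_eq_abs] at h

private lemma sqrt_pos' (x : ℝ) : 0 < Real.sqrt (x^2+1) :=
  Real.sqrt_pos.2 (by positivity)

private lemma hfun_pos (x : ℝ) : 0 < hfun x := by
  have h1 := abs_lt_sqrt' x
  have h2 := le_abs_self x
  unfold hfun; linarith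

private lemma hfun_hasDeriv (x : ℝ) :
    HasDerivAt hfun (-1 + x / Real.sqrt (x^2+1)) x := by
  have h1 : HasDerivAt (fun y : ℝ => y^2+1) (2*x) x := by
    simpa using (hasDerivAt_pow 2 x).add_const 1
  have h2 : HasDerivAt (fun y : ℝ => Real.sqrt (y^2+1))
      (2*x / (2 * Real.sqrt (x^2+1))) x := h1.sqrt (by positivity)
  have h3 : HasDerivAt (fun y : ℝ => -y) (-1 : ℝ) x := (hasDerivAt_id x).neg
  have := h3.add h2
  have hs := (sqrt_pos' x).ne'
  refine HasDerivAt.congr_deriv (f := hfun) this ?_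
  rw [mul_div_mul_left _ _ (two_ne_zero' ℝ)]

private lemma hfun_anti : StrictAnti hfun := by
  apply strictAnti_of_deriv_neg
  intro x
  rw [(hfun_hasDeriv x).deriv]
  have h1 := abs_lt_sqrt' x
  have h2 := le_abs_self x
  have h3 := sqrt_pos' x
  have : x / Real.sqrt (x^2+1) < 1 := (div_lt_one h3).2 (lt_of_le_of_lt h2 h1)
  linarith

private lemma hfun_cont : Continuous hfun := by
  unfold hfun
  exact continuous_neg.add (Real.continuous_sqrt.comp (by continuity))

private lemma hfun_le (x : ℝ) (hx : 0 < x) : hfun x ≤ 1 / (2*x) := by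
  have h1 : x^2 + 1 ≤ (x + 1/(2*x))^2 := by
    have hxne : x ≠ 0 := hx.ne'
    have he : (x + 1/(2*x))^2 = x^2 + 1 + (1/(2*x))^2 := by
      field_simp
      ring
    nlinarith [sq_nonneg (1/(2*x))]
  have h2 : Real.sqrt (x^2+1) ≤ x + 1/(2*x) := by
    calc Real.sqrt (x^2+1) ≤ Real.sqrt ((x + 1/(2*x))^2) := Real.sqrt_le_sqrt h1
      _ = x + 1/(2*x) := Real.sqrt_sq (by positivity)
  unfold hfun; linarith

private lemma hfun_tendsto_zero : Tendsto hfun atTop (nhds 0) := by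
  apply squeeze_zero' (Filter.Eventually.of_forall fun x => (hfun_pos x).le)
  · filter_upwards [eventually_gt_atTop (0:ℝ)] with x hx
    exact hfun_le x hx
  · have : Tendsto (fun x : ℝ => 2*x) atTop atTop :=
      Tendsto.const_mul_atTop two_pos tendsto_id
    simpa using (tendsto_const_nhds (x := (1:ℝ))).div_atTop this

private lemma hfun_tendsto_top : Tendsto hfun atBot atTop := by
  apply tendsto_atTop_mono (f := fun x : ℝ => -x)
  · intro x
    have := Real.sqrt_nonneg (x^2+1)
    unfold hfun; linarith
  · exact tendsto_neg_atBot_atTop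

/-- Quantum bounce of the three-volume `π^y = P(τ)`: with
`t(τ) = Ebar e^{-3ν₂τ} (f_L(cτ))^α` and `P(τ) = μObar(1 + t²)/(2t)`, the function `t` is strictly
decreasing, continuous, tends to `+∞` at `-∞` and to `0` at `+∞`, there is a unique `τ₀` with
`t τ₀ = 1`, `P ≥ μObar` with equality exactly at `τ₀`, and `P` diverges at `±∞`. -/
theorem stmt5 (L c α ν₂ Ebar Obar μ : ℝ) (hL : 0 < L) (hc : 0 < c) (hα : 0 < α) (hν₂ : 0 ≤ ν₂)
    (hEbar : 0 < Ebar) (hObar : 0 < Obar) (hμ : 0 < μ)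
    (t P : ℝ → ℝ)
    (ht : ∀ τ : ℝ, t τ = Ebar * Real.exp (-3*ν₂*τ) *
      (-(c*τ)/L + Real.sqrt ((c*τ/L)^2 + 1)) ^ α)
    (hP : ∀ τ : ℝ, P τ = μ * Obar * (1 + (t τ)^2) / (2 * t τ)) :
    StrictAnti t ∧ Continuous t ∧
    Filter.Tendsto t Filter.atBot Filter.atTop ∧
    Filter.Tendsto t Filter.atTop (nhds 0) ∧
    (∃ τ₀ : ℝ, t τ₀ = 1 ∧ (∀ τ : ℝ, t τ = 1 → τ = τ₀) ∧
      (∀ τ : ℝ, μ * Obar ≤ P τ) ∧ (∀ τ : ℝ, P τ = μ * Obar ↔ τ = τ₀)) ∧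
    Filter.Tendsto P Filter.atBot Filter.atTop ∧
    Filter.Tendsto P Filter.atTop Filter.atTop := by
  -- rewrite t in terms of hfun
  have ht' : ∀ τ : ℝ, t τ = Ebar * Real.exp (-3*ν₂*τ) * (hfun (c*τ/L)) ^ α := by
    intro τ
    rw [ht τ]
    unfold hfun
    rw [neg_div]
  -- positivity of t
  have htpos : ∀ τ : ℝ, 0 < t τ := by
    intro τ
    rw [ht' τ]
    exact mul_pos (mul_pos hEbar (Real.exp_pos _)) (Real.rpow_pos_of_pos (hfun_pos _) α)
  -- argument map tendsto
  have harg_top : Tendsto (fun τ : ℝ => c*τ/L) atTop atTop :=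
    (Tendsto.const_mul_atTop hc tendsto_id).atTop_div_const hL
  have harg_bot : Tendsto (fun τ : ℝ => c*τ/L) atBot atBot :=
    (Tendsto.const_mul_atBot hc tendsto_id).atBot_div_const hL
  -- strict anti
  have hanti : StrictAnti t := by
    intro a b hab
    rw [ht' a, ht' b]
    have hBa : 0 < hfun (c*a/L) := hfun_pos _
    have hBb : 0 < hfun (c*b/L) := hfun_pos _
    have hargs : c*a/L < c*b/L := by gcongr
    have hB : hfun (c*b/L) ^ α < hfun (c*a/L) ^ α :=
      Real.rpow_lt_rpow hBb.le (hfun_anti hargs) hα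
    have hE : Real.exp (-3*ν₂*b) ≤ Real.exp (-3*ν₂*a) := by
      apply Real.exp_le_exp.2
      nlinarith
    calc Ebar * Real.exp (-3*ν₂*b) * hfun (c*b/L) ^ α
        ≤ Ebar * Real.exp (-3*ν₂*a) * hfun (c*b/L) ^ α := by
          apply mul_le_mul_of_nonneg_right _ (Real.rpow_pos_of_pos hBb α).le
          exact mul_le_mul_of_nonneg_left hE hEbar.le
      _ < Ebar * Real.exp (-3*ν₂*a) * hfun (c*a/L) ^ α := by
          exact (mul_lt_mul_iff_right₀ (mul_pos hEbar (Real.exp_pos _))).2 hB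
  -- continuity
  have hcont : Continuous t := by
    have : t = fun τ : ℝ => Ebar * Real.exp (-3*ν₂*τ) * (hfun (c*τ/L)) ^ α :=
      funext ht'
    rw [this]
    apply Continuous.mul
    · exact continuous_const.mul (Real.continuous_exp.comp (by continuity))
    · exact (hfun_cont.comp (by continuity)).rpow_const fun x => Or.inr hα.le
  -- tendsto at bot: to atTop
  have htbot : Tendsto t atBot atTop := by
    apply tendsto_atTop_mono' atBot
      (f₁ := fun τ : ℝ => Ebar * (hfun (c*τ/L)) ^ α)
    · filter_upwards [eventually_le_atBot (0:ℝ)] with τ hτ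
      rw [ht' τ]
      have hE : (1:ℝ) ≤ Real.exp (-3*ν₂*τ) := by
        rw [Real.one_le_exp_iff]
        nlinarith
      have hB : 0 < hfun (c*τ/L) ^ α := Real.rpow_pos_of_pos (hfun_pos _) α
      have := mul_le_mul_of_nonneg_right (le_mul_of_one_le_right hEbar.le hE) hB.le
      linarith
    · exact Tendsto.const_mul_atTop hEbar
        (((tendsto_rpow_atTop hα).comp hfun_tendsto_top).comp harg_bot)
  -- tendsto at top: to 0
  have httop : Tendsto t atTop (nhds 0) := by
    apply squeeze_zero' (g := fun τ : ℝ => Ebar * (hfun (c*τ/L)) ^ α)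
      (Filter.Eventually.of_forall fun τ => (htpos τ).le)
    · filter_upwards [eventually_ge_atTop (0:ℝ)] with τ hτ
      rw [ht' τ]
      have hE : Real.exp (-3*ν₂*τ) ≤ 1 := by
        rw [Real.exp_le_one_iff]
        nlinarith
      have hB : 0 < hfun (c*τ/L) ^ α := Real.rpow_pos_of_pos (hfun_pos _) α
      have := mul_le_mul_of_nonneg_right (mul_le_of_le_one_right hEbar.le hE) hB.le
      linarith
    · have h1 : Tendsto (fun τ : ℝ => hfun (c*τ/L)) atTop (nhds 0) :=
        hfun_tendsto_zero.comp harg_top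
      have h2 : Tendsto (fun τ : ℝ => hfun (c*τ/L) ^ α) atTop (nhds 0) := by
        have := h1.rpow_const (Or.inr hα.le)
        rwa [Real.zero_rpow hα.ne'] at this
      simpa using h2.const_mul Ebar
  -- existence of τ₀
  obtain ⟨a, ha⟩ := (htbot.eventually_ge_atTop 2).exists
  obtain ⟨b, hb⟩ := (httop.eventually_lt_const one_pos).exists
  have hab : a < b := by
    by_contra h
    push_neg at h
    have := hanti.antitone h
    linarith
  have h1mem : (1:ℝ) ∈ Set.Icc (t b) (t a) := ⟨hb.le, by linarith⟩
  obtain ⟨τ₀, _, ht₀⟩ := intermediate_value_Icc' hab.le hcont.continuousOn h1mem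
  -- P facts
  have hPge : ∀ τ : ℝ, μ * Obar ≤ P τ := by
    intro τ
    rw [hP τ, le_div_iff₀ (by have := htpos τ; positivity)]
    nlinarith [sq_nonneg (t τ - 1), mul_pos hμ hObar, htpos τ]
  have hPeq : ∀ τ : ℝ, P τ = μ * Obar ↔ τ = τ₀ := by
    intro τ
    constructor
    · intro hPτ
      rw [hP τ, div_eq_iff (by have := htpos τ; positivity)] at hPτ
      have h1 : (t τ - 1)^2 = 0 := by nlinarith [mul_pos hμ hObar]
      have h2 : t τ = 1 := by nlinarith [sq_nonneg (t τ - 1)]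
      exact hanti.injective (h2.trans ht₀.symm)
    · intro h
      rw [h, hP τ₀, ht₀]
      norm_num
  refine ⟨hanti, hcont, htbot, httop,
    ⟨τ₀, ht₀, fun τ hτ => hanti.injective (hτ.trans ht₀.symm), hPge, hPeq⟩, ?_, ?_⟩
  · -- P at -∞
    apply tendsto_atTop_mono' atBot (f₁ := fun τ : ℝ => μ * Obar / 2 * t τ)
    · filter_upwards with τ
      rw [hP τ, le_div_iff₀ (by have := htpos τ; positivity)]
      nlinarith [htpos τ, mul_pos hμ hObar]
    · exact Tendsto.const_mul_atTop (by positivity) htbot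
  · -- P at +∞
    apply tendsto_atTop_mono' atTop (f₁ := fun τ : ℝ => μ * Obar / 2 * (t τ)⁻¹)
    · filter_upwards with τ
      rw [hP τ, le_div_iff₀ (by have := htpos τ; positivity)]
      have hτ := htpos τ
      have hinv : (t τ)⁻¹ * t τ = 1 := inv_mul_cancel₀ hτ.ne'
      nlinarith [mul_pos hμ hObar, sq_nonneg (t τ), hinv]
    · apply Tendsto.const_mul_atTop (by positivity)
      apply Tendsto.inv_tendsto_nhdsGT_zero
      rw [tendsto_nhdsWithin_iff]
      exact ⟨httop, Filter.Eventually.of_forall fun τ => htpos τ⟩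
end

section
/- Let L > 0 and define f_L : ℝ → ℝ by f_L(s) = -s/L + √((s/L)² + 1). Let K and Ō be positive real numbers with K > Ō/2. Define s(τ) := 2·f_L(τ)/(1 + f_L(τ)²) and Π(τ) := (K - (Ō/2)·s(τ))/s(τ)². Then Π(τ) ≥ K - Ō/2 > 0 for all τ ∈ ℝ, with equality if and only if τ = 0, and lim_{τ→-∞} Π(τ) = +∞ and lim_{τ→+∞} Π(τ) = +∞. -/
set_option maxHeartbeats 1600000


/-- Quantum bounce of `π̄¹` in the constant-spread scenario with `ε₀ = 0`: with
`s(τ) = 2 f_L(τ)/(1 + f_L(τ)²)` and `Π(τ) = (K - (Obar/2)s)/s²`, one has `Π ≥ K - Obar/2 > 0`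
with equality iff `τ = 0`, and `Π` diverges at `±∞`. -/
theorem stmt7 (L K Obar : ℝ) (hL : 0 < L) (hK : 0 < K) (hObar : 0 < Obar) (hbig : Obar/2 < K)
    (s Φ : ℝ → ℝ)
    (hs : ∀ τ : ℝ, s τ = 2 * (-τ/L + Real.sqrt ((τ/L)^2 + 1)) /
      (1 + (-τ/L + Real.sqrt ((τ/L)^2 + 1))^2))
    (hΦ : ∀ τ : ℝ, Φ τ = (K - (Obar/2) * s τ)/(s τ)^2) :
    (0 < K - Obar/2) ∧
    (∀ τ : ℝ, K - Obar/2 ≤ Φ τ) ∧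
    (∀ τ : ℝ, Φ τ = K - Obar/2 ↔ τ = 0) ∧
    Filter.Tendsto Φ Filter.atBot Filter.atTop ∧
    Filter.Tendsto Φ Filter.atTop Filter.atTop := by
  have hc : 0 < K - Obar/2 := by linarith
  -- Basic properties of s
  have key : ∀ τ : ℝ, 0 < s τ ∧ s τ ≤ 1 ∧ (s τ = 1 ↔ τ = 0) ∧ s τ * |τ| ≤ 2*L := by
    intro τ
    obtain ⟨x, hx⟩ : ∃ x : ℝ, τ/L = x := ⟨_, rfl⟩
    obtain ⟨r, hrdef⟩ : ∃ r : ℝ, Real.sqrt (x^2+1) = r := ⟨_, rfl⟩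
    have hr0 : 0 ≤ r := hrdef ▸ Real.sqrt_nonneg _
    have hr2 : r^2 = x^2+1 := by
      rw [← hrdef]; exact Real.sq_sqrt (by positivity)
    have hrx : |x| < r := by
      rw [← hrdef, show |x| = Real.sqrt (x^2) from (Real.sqrt_sq_eq_abs x).symm]
      exact Real.sqrt_lt_sqrt (sq_nonneg x) (by linarith)
    obtain ⟨f, hfdef⟩ : ∃ f : ℝ, -x + r = f := ⟨_, rfl⟩
    have hfx : 0 < f := by
      rw [← hfdef]
      have h1 := le_abs_self x
      linarith
    have hs' : s τ = 2*f/(1+f^2) := by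
      rw [hs τ]
      simp only [neg_div]
      rw [hx, hrdef, hfdef]
    have hτx : τ = x * L := by
      rw [← hx]; field_simp
    have hden : 0 < 1 + f^2 := by positivity
    have hspos : 0 < s τ := by
      rw [hs']; exact div_pos (by linarith) hden
    have hsle : s τ ≤ 1 := by
      rw [hs', div_le_one hden]; nlinarith [sq_nonneg (f-1)]
    have hiff : s τ = 1 ↔ τ = 0 := by
      constructor
      · intro h
        rw [hs', div_eq_one_iff_eq (ne_of_gt hden)] at h
        have hf1 : f = 1 := by nlinarith [sq_nonneg (f-1)]
        have hrx1 : r = 1 + x := by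
          rw [← hfdef] at hf1; linarith
        have hx0 : x = 0 := by nlinarith
        rw [hτx, hx0, zero_mul]
      · intro h
        have hx0 : x = 0 := by rw [← hx, h, zero_div]
        have hr1 : r = 1 := by
          rw [← hrdef, hx0]; norm_num
        have hf1 : f = 1 := by rw [← hfdef, hx0, hr1]; ring
        rw [hs', hf1]; norm_num
    have hbound : s τ * |τ| ≤ 2*L := by
      have hτ : |τ| = |x| * L := by
        rw [hτx, abs_mul, abs_of_pos hL]
      have hsx : s τ * |x| ≤ 2 := by
        rcases le_or_gt x 0 with h | h
        · have h1 : |x| ≤ f := by rw [abs_of_nonpos h, ← hfdef]; linarith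
          rw [hs', div_mul_eq_mul_div, div_le_iff₀ hden]
          nlinarith [abs_nonneg x, sq_nonneg f, mul_nonneg hfx.le (abs_nonneg x)]
        · have hfr : f * (x + r) = 1 := by rw [← hfdef]; nlinarith
          have h1 : f * x ≤ 1 := by nlinarith [mul_nonneg hfx.le hr0]
          rw [abs_of_pos h, hs', div_mul_eq_mul_div, div_le_iff₀ hden]
          nlinarith [sq_nonneg f]
      calc s τ * |τ| = (s τ * |x|) * L := by rw [hτ]; ring
        _ ≤ 2 * L := by nlinarith
    exact ⟨hspos, hsle, hiff, hbound⟩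
  -- Lower bound
  have hlb : ∀ τ : ℝ, K - Obar/2 ≤ Φ τ := by
    intro τ
    obtain ⟨h0, h1, _, _⟩ := key τ
    rw [hΦ, le_div_iff₀ (pow_pos h0 2)]
    nlinarith [mul_nonneg (sub_nonneg.2 h1) (show 0 ≤ K*(1 + s τ) - Obar/2 * s τ by nlinarith)]
  -- Equality characterization
  have heq : ∀ τ : ℝ, Φ τ = K - Obar/2 ↔ τ = 0 := by
    intro τ
    obtain ⟨h0, h1, hiff, _⟩ := key τ
    constructor
    · intro h
      rw [hΦ, div_eq_iff (pow_pos h0 2).ne'] at h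
      have hfac : (1 - s τ) * (K*(1 + s τ) - Obar/2 * s τ) = 0 := by nlinarith
      have hpos : 0 < K*(1 + s τ) - Obar/2 * s τ := by nlinarith
      have hs1 : s τ = 1 := by
        rcases mul_eq_zero.1 hfac with h' | h'
        · linarith
        · linarith
      exact hiff.1 hs1
    · intro h
      have hs1 : s τ = 1 := hiff.2 h
      rw [hΦ, hs1]
      norm_num
  -- Divergence: for any b there is T > 0 s.t. |τ| ≥ T implies b ≤ Φ τ
  have hdiv : ∀ b : ℝ, ∃ T : ℝ, 0 < T ∧ ∀ τ : ℝ, T ≤ |τ| → b ≤ Φ τ := by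
    intro b
    obtain ⟨B, hBdef⟩ : ∃ B : ℝ, max b (K - Obar/2) = B := ⟨_, rfl⟩
    have hBb : b ≤ B := hBdef ▸ le_max_left _ _
    have hBc : K - Obar/2 ≤ B := hBdef ▸ le_max_right _ _
    have hBpos : 0 < B := lt_of_lt_of_le hc hBc
    obtain ⟨q, hqdef⟩ : ∃ q : ℝ, Real.sqrt (B/(K - Obar/2)) = q := ⟨_, rfl⟩
    have hq2 : q^2 = B/(K - Obar/2) := by
      rw [← hqdef]; exact Real.sq_sqrt (div_nonneg hBpos.le hc.le)
    have hq1 : 1 ≤ q := by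
      rw [← hqdef, show (1:ℝ) = Real.sqrt 1 from Real.sqrt_one.symm]
      exact Real.sqrt_le_sqrt ((le_div_iff₀ hc).2 (by linarith))
    have hTpos : 0 < 2*L*q :=
      mul_pos (by linarith : (0:ℝ) < 2*L) (by linarith : (0:ℝ) < q)
    refine ⟨2*L*q, hTpos, fun τ hτ => ?_⟩
    obtain ⟨h0, h1, _, hb⟩ := key τ
    have hτpos : 0 < |τ| := lt_of_lt_of_le hTpos hτ
    have hτ2 : 0 < |τ|^2 := pow_pos hτpos 2
    have h2 : (s τ * |τ|)^2 ≤ (2*L)^2 := by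
      nlinarith [mul_nonneg h0.le (abs_nonneg τ)]
    have h3 : (2*L*q)^2 ≤ |τ|^2 := by
      nlinarith [mul_pos (mul_pos (by linarith : (0:ℝ) < 2*L)
        (by linarith : (0:ℝ) < q)) hτpos]
    have h4 : B * (s τ)^2 * |τ|^2 ≤ (K - Obar/2) * |τ|^2 := by
      have hcq : (K - Obar/2) * (2*L*q)^2 = 4*L^2*B := by
        have hq3 : (K - Obar/2) * q^2 = B := by
          rw [hq2, mul_comm]
          exact div_mul_cancel₀ B (ne_of_gt hc)
        nlinarith
      nlinarith [h2, h3, hBpos.le]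
    have h5 : B * (s τ)^2 ≤ K - Obar/2 := by
      have := (mul_le_mul_iff_of_pos_right hτ2).1 h4
      linarith
    have h6 : B ≤ Φ τ := by
      rw [hΦ, le_div_iff₀ (pow_pos h0 2)]
      have : K - Obar/2 ≤ K - Obar/2 * s τ := by nlinarith
      linarith
    linarith
  refine ⟨hc, hlb, heq, ?_, ?_⟩
  · rw [Filter.tendsto_atTop]
    intro b
    obtain ⟨T, hT, h⟩ := hdiv b
    filter_upwards [Filter.eventually_le_atBot (-T)] with τ hτ
    exact h τ (by rw [abs_of_nonpos (by linarith)]; linarith)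
  · rw [Filter.tendsto_atTop]
    intro b
    obtain ⟨T, hT, h⟩ := hdiv b
    filter_upwards [Filter.eventually_ge_atTop T] with τ hτ
    exact h τ (by rw [abs_of_pos (by linarith)]; exact hτ)
end

section
/- Let L > 0 and define f_L : ℝ → ℝ by f_L(s) = -s/L + √((s/L)² + 1). Let c > 0, ν₁ > 0, ν₂ > 0, Ē > 0, Ō > 0, μ > 0, ε₂ > 0, and K with K - 2ε₂Ō > 0. Define s(τ) := 2·f_L(cτ)/(1 + f_L(cτ)²), Π(τ) := (K - 2ε₂Ō)/s(τ)² - ν₁Ō/s(τ), t(τ) := Ē·e^{-3ν₂τ}·(f_L(cτ))^{3ν₁}, and P(τ) := μ·Ō·(1 + t(τ)²)/(2·t(τ)). Then lim_{τ→+∞} Π(τ)/P(τ) = 0 while lim_{τ→+∞} P(τ) = +∞. -/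
open Filter Real

private lemma polyexp (n : ℕ) {k : ℝ} (hk : 0 < k) :
    Tendsto (fun τ : ℝ => τ ^ n * Real.exp (-(k * τ))) atTop (nhds 0) := by
  have h1 : Tendsto (fun τ : ℝ => k * τ) atTop atTop :=
    Tendsto.const_mul_atTop hk tendsto_id
  have h2 := (tendsto_pow_mul_exp_neg_atTop_nhds_zero n).comp h1
  have h3 := h2.const_mul ((k⁻¹) ^ n)
  rw [mul_zero] at h3
  refine h3.congr fun τ => ?_
  simp only [Function.comp]
  rw [mul_pow]
  field_simp
  rw [← mul_pow, one_div, inv_mul_cancel₀ hk.ne', one_pow, one_mul]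

private lemma affine_sq_exp {a b k : ℝ} (hk : 0 < k) :
    Tendsto (fun τ : ℝ => (a * τ + b) ^ 2 * Real.exp (-(k * τ))) atTop (nhds 0) := by
  have h := (((polyexp 2 hk).const_mul (a ^ 2)).add
    ((polyexp 1 hk).const_mul (2 * a * b))).add ((polyexp 0 hk).const_mul (b ^ 2))
  simp only [mul_zero, add_zero, zero_add] at h
  refine h.congr fun τ => ?_
  ring

set_option maxHeartbeats 1000000 in
/-- Dynamical compactification: the extra-dimensional scale factor
`b ∝ Π(τ)/P(τ)` tends to `0` while the three-volume `P(τ)` diverges as `τ → +∞`. -/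
theorem stmt9 (L c ν₁ ν₂ Ebar Obar μ ε₂ K : ℝ) (hL : 0 < L) (hc : 0 < c) (hν₁ : 0 < ν₁)
    (hν₂ : 0 < ν₂) (hEbar : 0 < Ebar) (hObar : 0 < Obar) (hμ : 0 < μ) (hε₂ : 0 < ε₂)
    (hK : 0 < K - 2*ε₂*Obar)
    (s Φ t P : ℝ → ℝ)
    (hs : ∀ τ : ℝ, s τ = 2 * (-(c*τ)/L + Real.sqrt ((c*τ/L)^2 + 1)) /
      (1 + (-(c*τ)/L + Real.sqrt ((c*τ/L)^2 + 1))^2))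
    (hΦ : ∀ τ : ℝ, Φ τ = (K - 2*ε₂*Obar)/(s τ)^2 - ν₁*Obar/(s τ))
    (ht : ∀ τ : ℝ, t τ = Ebar * Real.exp (-3*ν₂*τ) *
      (-(c*τ)/L + Real.sqrt ((c*τ/L)^2 + 1)) ^ (3*ν₁))
    (hP : ∀ τ : ℝ, P τ = μ * Obar * (1 + (t τ)^2) / (2 * t τ)) :
    Filter.Tendsto (fun τ : ℝ => Φ τ / P τ) Filter.atTop (nhds 0) ∧
    Filter.Tendsto P Filter.atTop Filter.atTop := by
  set A := K - 2*ε₂*Obar with hA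
  set B := ν₁ * Obar with hB
  have hBpos : 0 < B := mul_pos hν₁ hObar
  set f : ℝ → ℝ := fun τ => -(c*τ)/L + Real.sqrt ((c*τ/L)^2 + 1) with hf
  set x : ℝ → ℝ := fun τ => c*τ/L with hx
  have hsqrt : ∀ τ, (Real.sqrt ((x τ)^2 + 1))^2 = (x τ)^2 + 1 :=
    fun τ => Real.sq_sqrt (by positivity)
  have hfx : ∀ τ, f τ = Real.sqrt ((x τ)^2 + 1) - x τ := by
    intro τ; simp only [hf, hx, neg_div]; ring
  have hfpos : ∀ τ, 0 < f τ := by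
    intro τ
    rw [hfx]
    have h1 : |x τ| < Real.sqrt ((x τ)^2 + 1) := by
      rw [← Real.sqrt_sq_eq_abs]
      exact Real.sqrt_lt_sqrt (sq_nonneg _) (by linarith)
    have := le_abs_self (x τ)
    linarith
  have hkey : ∀ τ, f τ * (x τ + Real.sqrt ((x τ)^2 + 1)) = 1 := by
    intro τ
    have := hsqrt τ
    rw [hfx]
    nlinarith [this]
  have hxnn : ∀ τ, 0 ≤ τ → 0 ≤ x τ := by
    intro τ hτ; simp only [hx]; positivity
  have hfle1 : ∀ τ, 0 ≤ τ → f τ ≤ 1 := by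
    intro τ hτ
    have h1 := hkey τ
    have h2 := hfpos τ
    have h3 : (1:ℝ) ≤ Real.sqrt ((x τ)^2 + 1) := by
      nlinarith [hsqrt τ, Real.sqrt_nonneg ((x τ)^2 + 1), sq_nonneg (x τ)]
    have h4 := hxnn τ hτ
    nlinarith
  have hf_lb : ∀ τ, 0 ≤ τ → 1 ≤ f τ * (2 * x τ + 1) := by
    intro τ hτ
    have h1 := hkey τ
    have h2 := hfpos τ
    have h4 := hxnn τ hτ
    have h5 : Real.sqrt ((x τ)^2 + 1) ≤ x τ + 1 := by
      nlinarith [hsqrt τ, Real.sqrt_nonneg ((x τ)^2 + 1)]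
    nlinarith
  have hf_ub : ∀ τ, 0 ≤ τ → f τ * (2 * x τ) ≤ 1 := by
    intro τ hτ
    have h1 := hkey τ
    have h2 := hfpos τ
    have h4 := hxnn τ hτ
    have h5 : x τ ≤ Real.sqrt ((x τ)^2 + 1) := by
      nlinarith [hsqrt τ, Real.sqrt_nonneg ((x τ)^2 + 1)]
    nlinarith
  have hsf : ∀ τ, s τ = 2 * f τ / (1 + (f τ)^2) := fun τ => hs τ
  have hspos : ∀ τ, 0 < s τ := by
    intro τ
    rw [hsf]
    have := hfpos τ
    positivity
  have hs_le_2f : ∀ τ, s τ ≤ 2 * f τ := by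
    intro τ
    rw [hsf]
    have h2 := hfpos τ
    rw [div_le_iff₀ (by positivity)]
    nlinarith
  have hs_ge_f : ∀ τ, 0 ≤ τ → f τ ≤ s τ := by
    intro τ hτ
    rw [hsf]
    have h1 := hfpos τ
    have h2 := hfle1 τ hτ
    rw [le_div_iff₀ (by positivity)]
    nlinarith
  have htpos : ∀ τ, 0 < t τ := by
    intro τ
    rw [ht τ]
    have := hfpos τ
    positivity
  have ht_ub : ∀ τ, 0 ≤ τ → t τ ≤ Ebar * Real.exp (-3*ν₂*τ) := by
    intro τ hτ
    rw [ht τ]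
    have h1 : (f τ) ^ (3*ν₁) ≤ 1 :=
      Real.rpow_le_one (le_of_lt (hfpos τ)) (hfle1 τ hτ) (by positivity)
    have h2 : (0:ℝ) ≤ Ebar * Real.exp (-3*ν₂*τ) := by positivity
    calc Ebar * Real.exp (-3*ν₂*τ) * (f τ) ^ (3*ν₁)
        ≤ Ebar * Real.exp (-3*ν₂*τ) * 1 := mul_le_mul_of_nonneg_left h1 h2
      _ = Ebar * Real.exp (-3*ν₂*τ) := by ring
  -- the exponential envelope tends to 0
  have hexp0 : Tendsto (fun τ : ℝ => Ebar * Real.exp (-3*ν₂*τ)) atTop (nhds 0) := by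
    have h1 : Tendsto (fun τ : ℝ => (3*ν₂) * τ) atTop atTop :=
      Tendsto.const_mul_atTop (by linarith) tendsto_id
    have h2 : Tendsto (fun τ : ℝ => -3*ν₂*τ) atTop atBot := by
      have h := tendsto_neg_atTop_atBot.comp h1
      refine h.congr fun τ => ?_
      simp only [Function.comp]
      ring
    have h3 := (Real.tendsto_exp_atBot).comp h2
    have h4 := h3.const_mul Ebar
    simpa using h4
  have ht0 : Tendsto t atTop (nhds 0) := by
    refine squeeze_zero' ?_ ?_ hexp0
    · filter_upwards with τ using (htpos τ).le
    · filter_upwards [eventually_ge_atTop (0:ℝ)] with τ hτ using ht_ub τ hτ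
  -- P tends to +∞
  have hPeq : ∀ τ, P τ = (μ*Obar/2) * (t τ)⁻¹ + (μ*Obar/2) * t τ := by
    intro τ
    rw [hP τ]
    have h := (htpos τ).ne'
    field_simp
  have htinv : Tendsto (fun τ => (t τ)⁻¹) atTop atTop := by
    apply Filter.Tendsto.inv_tendsto_nhdsGT_zero
    apply tendsto_nhdsWithin_of_tendsto_nhds_of_eventually_within _ ht0
    filter_upwards with τ using htpos τ
  have hPtop : Tendsto P atTop atTop := by
    rw [show P = fun τ => (μ*Obar/2) * (t τ)⁻¹ + (μ*Obar/2) * t τ from funext hPeq]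
    refine tendsto_atTop_add_right_of_le _ 0
      (Tendsto.const_mul_atTop (by positivity) htinv) ?_
    exact fun τ => le_of_lt (mul_pos (by positivity) (htpos τ))
  -- x tends to +∞
  have hxtop : Tendsto x atTop atTop := by
    have h1 : Tendsto (fun τ : ℝ => c * τ) atTop atTop :=
      Tendsto.const_mul_atTop hc tendsto_id
    exact h1.atTop_div_const hL
  -- Φ * t tends to 0
  have hΦt0 : Tendsto (fun τ => Φ τ * t τ) atTop (nhds 0) := by
    have hg0 : Tendsto (fun τ : ℝ =>
        (A * Ebar) * ((2*(c/L) * τ + 1)^2 * Real.exp (-(3*ν₂*τ)))) atTop (nhds 0) := by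
      have := (affine_sq_exp (a := 2*(c/L)) (b := 1)
        (k := 3*ν₂) (by linarith)).const_mul (A * Ebar)
      simpa using this
    refine squeeze_zero' ?_ ?_ hg0
    · -- eventual nonnegativity of Φ * t
      filter_upwards [eventually_ge_atTop (0:ℝ), hxtop.eventually_ge_atTop (B / A)]
        with τ hτ hxB
      have h1 := hfpos τ
      have h2 := hspos τ
      have h3 := hf_ub τ hτ
      have h4 := hs_le_2f τ
      have hxB' : B ≤ x τ * A := by
        rw [div_le_iff₀ hK] at hxB
        linarith
      have hxp : 0 < x τ := lt_of_lt_of_le (by positivity) hxB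
      have hsxA : s τ * (x τ * A) ≤ A := by nlinarith
      have hsB : s τ * B ≤ A := by nlinarith
      have hΦnn : 0 ≤ Φ τ := by
        rw [hΦ τ, show A/(s τ)^2 - B/(s τ) = (A - s τ * B)/(s τ)^2 by
          field_simp]
        apply div_nonneg (by linarith) (by positivity)
      exact mul_nonneg hΦnn (htpos τ).le
    · -- eventual upper bound
      filter_upwards [eventually_ge_atTop (0:ℝ)] with τ hτ
      have h1 := hfpos τ
      have h2 := hspos τ
      have hlb := hf_lb τ hτ
      have hge := hs_ge_f τ hτ
      have hΦub : Φ τ ≤ A * (2 * x τ + 1)^2 := by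
        rw [hΦ τ]
        have hB : 0 < B / s τ := by positivity
        have hstep1 : A / (s τ)^2 ≤ A / (f τ)^2 :=
          div_le_div_of_nonneg_left hK.le (by positivity) (by nlinarith)
        have hstep2 : A / (f τ)^2 ≤ A * (2 * x τ + 1)^2 := by
          rw [div_le_iff₀ (by positivity)]
          have hq : (1:ℝ) ≤ (f τ * (2 * x τ + 1))^2 := by nlinarith
          calc A = A * 1 := by ring
            _ ≤ A * (f τ * (2 * x τ + 1))^2 := by nlinarith
            _ = A * (2 * x τ + 1)^2 * (f τ)^2 := by ring
        linarith
      have htub := ht_ub τ hτ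
      have hbnd : Φ τ * t τ ≤ (A * (2 * x τ + 1)^2) * (Ebar * Real.exp (-3*ν₂*τ)) := by
        by_cases hΦsign : 0 ≤ Φ τ
        · exact mul_le_mul hΦub htub (htpos τ).le
            (mul_nonneg hK.le (sq_nonneg _))
        · push_neg at hΦsign
          have : Φ τ * t τ ≤ 0 := mul_nonpos_of_nonpos_of_nonneg hΦsign.le (htpos τ).le
          have : (0:ℝ) ≤ (A * (2 * x τ + 1)^2) * (Ebar * Real.exp (-3*ν₂*τ)) :=
            mul_nonneg (mul_nonneg hK.le (sq_nonneg _)) (by positivity)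
          linarith
      calc Φ τ * t τ ≤ (A * (2 * x τ + 1)^2) * (Ebar * Real.exp (-3*ν₂*τ)) := hbnd
        _ = (A * Ebar) * ((2*(c/L) * τ + 1)^2 * Real.exp (-(3*ν₂*τ))) := by
            simp only [hx]
            rw [show -3*ν₂*τ = -(3*ν₂*τ) by ring]
            ring
  -- conclude Φ / P → 0
  have hfrac : Tendsto (fun τ => 2 / (μ * Obar * (1 + (t τ)^2))) atTop
      (nhds (2 / (μ * Obar * (1 + (0:ℝ)^2)))) := by
    refine Tendsto.div tendsto_const_nhds ?_ (by positivity)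
    exact tendsto_const_nhds.mul (tendsto_const_nhds.add (ht0.pow 2))
  have hmain : Tendsto (fun τ => Φ τ / P τ) atTop (nhds 0) := by
    have h := hΦt0.mul hfrac
    rw [zero_mul] at h
    refine h.congr fun τ => ?_
    rw [hP τ]
    have h1 := (htpos τ).ne'
    have h2 : (1:ℝ) + (t τ)^2 ≠ 0 := by positivity
    field_simp
  exact ⟨hmain, hPtop⟩
end

section
/- Let a₀ > 0, ν₂ > 0 and 0 < ν₁ < 1, and define a : (0,∞) → ℝ by a(τ) = a₀·e^{ν₂τ}·τ^{ν₁}. Set τ₂ := (√ν₁ - ν₁)/ν₂ > 0. Then a'(τ) > 0 for all τ > 0, and the second derivative satisfies a''(τ) < 0 for 0 < τ < τ₂, a''(τ₂) = 0, and a''(τ) > 0 for τ > τ₂. -/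
/-- Deceleration-to-acceleration transition of the late-time scale factor
`a(τ) = a₀ e^{ν₂τ} τ^{ν₁}` with `0 < ν₁ < 1`, `ν₂ > 0`: `a' > 0` on `(0,∞)`, and `a''`
is negative on `(0, τ₂)`, zero at `τ₂ = (√ν₁ - ν₁)/ν₂`, positive on `(τ₂, ∞)`. -/
theorem stmt10 (a₀ ν₁ ν₂ : ℝ) (ha₀ : 0 < a₀) (hν₂ : 0 < ν₂) (hν₁ : 0 < ν₁) (hν₁' : ν₁ < 1)
    (a : ℝ → ℝ) (hA : ∀ τ : ℝ, a τ = a₀ * Real.exp (ν₂*τ) * τ ^ ν₁)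
    (τ₂ : ℝ) (hτ₂ : τ₂ = (Real.sqrt ν₁ - ν₁)/ν₂) :
    0 < τ₂ ∧
    (∀ τ : ℝ, 0 < τ → 0 < deriv a τ) ∧
    (∀ τ : ℝ, 0 < τ → τ < τ₂ → deriv (deriv a) τ < 0) ∧
    deriv (deriv a) τ₂ = 0 ∧
    (∀ τ : ℝ, τ₂ < τ → 0 < deriv (deriv a) τ) := by
  have haf : a = fun τ => a₀ * Real.exp (ν₂*τ) * τ ^ ν₁ := funext hA
  subst haf
  set s := Real.sqrt ν₁ with hs_def
  have hs2 : s ^ 2 = ν₁ := Real.sq_sqrt hν₁.le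
  have hs0 : 0 < s := Real.sqrt_pos.mpr hν₁
  have hs1 : s < 1 := by nlinarith
  have hν₁s : ν₁ < s := by nlinarith
  have hτ₂pos : 0 < τ₂ := by
    rw [hτ₂]; exact div_pos (by linarith) hν₂
  -- first derivative
  set g : ℝ → ℝ := fun τ => a₀ * Real.exp (ν₂*τ) * ((ν₂*τ + ν₁) * τ ^ (ν₁-1)) with hg_def
  have hd1 : ∀ τ : ℝ, 0 < τ →
      HasDerivAt (fun τ => a₀ * Real.exp (ν₂*τ) * τ ^ ν₁) (g τ) τ := by
    intro τ hτ
    have hexp : HasDerivAt (fun τ : ℝ => a₀ * Real.exp (ν₂*τ))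
        (a₀ * (Real.exp (ν₂*τ) * ν₂)) τ := by
      have h1 : HasDerivAt (fun τ : ℝ => ν₂ * τ) ν₂ τ := by
        simpa using (hasDerivAt_id τ).const_mul ν₂
      simpa using (h1.exp.const_mul a₀)
    have hrpow : HasDerivAt (fun τ : ℝ => τ ^ ν₁) (ν₁ * τ ^ (ν₁-1)) τ :=
      Real.hasDerivAt_rpow_const (Or.inl hτ.ne')
    have hmul := hexp.mul hrpow
    have hkey : τ ^ ν₁ = τ ^ (ν₁-1) * τ := by
      rw [← Real.rpow_add_one hτ.ne']; ring_nf
    convert hmul using 1; rfl; rfl; rfl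
    rw [hg_def]; simp only []; rw [hkey]; ring
  set h : ℝ → ℝ := fun τ =>
    a₀ * Real.exp (ν₂*τ) * (((ν₂*τ + ν₁)^2 - ν₁) * τ ^ (ν₁-2)) with hh_def
  have hd2 : ∀ τ : ℝ, 0 < τ → HasDerivAt g (h τ) τ := by
    intro τ hτ
    have hexp : HasDerivAt (fun τ : ℝ => a₀ * Real.exp (ν₂*τ))
        (a₀ * (Real.exp (ν₂*τ) * ν₂)) τ := by
      have h1 : HasDerivAt (fun τ : ℝ => ν₂ * τ) ν₂ τ := by
        simpa using (hasDerivAt_id τ).const_mul ν₂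
      simpa using (h1.exp.const_mul a₀)
    have hrpow : HasDerivAt (fun τ : ℝ => τ ^ (ν₁-1)) ((ν₁-1) * τ ^ (ν₁-2)) τ := by
      have := Real.hasDerivAt_rpow_const (p := ν₁-1) (Or.inl hτ.ne')
      have he : ν₁ - 1 - 1 = ν₁ - 2 := by ring
      rwa [he] at this
    have hlin : HasDerivAt (fun τ : ℝ => ν₂*τ + ν₁) ν₂ τ := by
      simpa using ((hasDerivAt_id τ).const_mul ν₂).add_const ν₁
    have hmul := hexp.mul (hlin.mul hrpow)
    have hkey : τ ^ (ν₁-1) = τ ^ (ν₁-2) * τ := by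
      rw [← Real.rpow_add_one hτ.ne']; ring_nf
    convert hmul using 1; rfl; rfl; rfl
    rw [hh_def]; simp only [Pi.mul_apply]; rw [hkey]; ring
  have hda : ∀ τ : ℝ, 0 < τ → deriv (fun τ => a₀ * Real.exp (ν₂*τ) * τ ^ ν₁) τ = g τ :=
    fun τ hτ => (hd1 τ hτ).deriv
  have hdda : ∀ τ : ℝ, 0 < τ →
      deriv (deriv (fun τ => a₀ * Real.exp (ν₂*τ) * τ ^ ν₁)) τ = h τ := by
    intro τ hτ
    have heq : deriv (fun τ => a₀ * Real.exp (ν₂*τ) * τ ^ ν₁) =ᶠ[nhds τ] g := by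
      filter_upwards [Ioi_mem_nhds hτ] with x hx using hda x hx
    rw [heq.deriv_eq]
    exact (hd2 τ hτ).deriv
  refine ⟨hτ₂pos, ?_, ?_, ?_, ?_⟩
  · intro τ hτ
    rw [hda τ hτ, hg_def]
    have := Real.rpow_pos_of_pos hτ (ν₁-1)
    positivity
  · intro τ hτ hττ₂
    rw [hdda τ hτ, hh_def]
    have hp : (0:ℝ) < τ ^ (ν₁-2) := Real.rpow_pos_of_pos hτ _
    have hu : ν₂*τ + ν₁ < s := by
      rw [hτ₂] at hττ₂
      have : ν₂ * τ < s - ν₁ := by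
        calc ν₂ * τ < ν₂ * ((s - ν₁)/ν₂) := by exact (mul_lt_mul_iff_right₀ hν₂).mpr hττ₂
        _ = s - ν₁ := by field_simp
      linarith
    have hu0 : 0 < ν₂*τ + ν₁ := by positivity
    have hQ : (ν₂*τ + ν₁)^2 - ν₁ < 0 := by nlinarith
    exact mul_neg_of_pos_of_neg (by positivity) (mul_neg_of_neg_of_pos hQ hp)
  · rw [hdda τ₂ hτ₂pos, hh_def]
    have hu : ν₂*τ₂ + ν₁ = s := by rw [hτ₂]; field_simp; ring
    simp only []
    rw [hu, hs2]
    ring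
  · intro τ hτ
    have hτ0 : 0 < τ := hτ₂pos.trans hτ
    rw [hdda τ hτ0, hh_def]
    have hp : (0:ℝ) < τ ^ (ν₁-2) := Real.rpow_pos_of_pos hτ0 _
    have hu : s < ν₂*τ + ν₁ := by
      rw [hτ₂] at hτ
      have : s - ν₁ < ν₂ * τ := by
        calc s - ν₁ = ν₂ * ((s - ν₁)/ν₂) := by field_simp
        _ < ν₂ * τ := (mul_lt_mul_iff_right₀ hν₂).mpr hτ
      linarith
    have hQ : 0 < (ν₂*τ + ν₁)^2 - ν₁ := by nlinarith
    exact mul_pos (by positivity) (mul_pos hQ hp)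
end

section
/- For all real numbers ε > 0 and m > 0, ∫₀^∞ h²·e^{-ε²(h+m)²} dh < e^{-ε²m²}/(2·ε⁴·m). -/
open MeasureTheory Real Set

lemma exp_decay_integral (b : ℝ) (hb : 0 < b) :
    (∫ x in Set.Ioi (0:ℝ), Real.exp (-(b * x))) = 1 / b := by
  have := MeasureTheory.integral_comp_mul_left_Ioi (fun x => Real.exp (-x)) 0 hb
  simp only [mul_zero, integral_exp_neg_Ioi_zero, smul_eq_mul, mul_one] at this
  rw [show (fun x : ℝ => Real.exp (-(b*x))) = (fun x : ℝ => Real.exp (-(b*x))) from rfl]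
  simpa [one_div] using this

/-- Gaussian-tail estimate: for `ε, m > 0`,
`∫₀^∞ h² e^{-ε²(h+m)²} dh < e^{-ε²m²}/(2ε⁴m)`. -/
theorem stmt13 (ε m : ℝ) (hε : 0 < ε) (hm : 0 < m) :
    (∫ h in Set.Ioi (0:ℝ), h^2 * Real.exp (-ε^2 * (h + m)^2))
      < Real.exp (-ε^2 * m^2) / (2 * ε^4 * m) := by
  set b : ℝ := 2 * ε^2 * m with hb_def
  have hb : 0 < b := by positivity
  set C : ℝ := Real.exp (-ε^2 * m^2) with hC_def
  have hC : 0 < C := Real.exp_pos _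
  set f : ℝ → ℝ := fun h => h^2 * Real.exp (-ε^2 * (h + m)^2) with hf_def
  set g : ℝ → ℝ := fun h => (1/ε^2) * C * Real.exp (-(b * h)) with hg_def
  set c : ℝ → ℝ := fun h => (1/ε^2) * Real.exp (-ε^2 * (h + m)^2) with hc_def
  -- key pointwise bound: f h + c h ≤ g h for h ≥ 0
  have key : ∀ h : ℝ, 0 ≤ h → f h + c h ≤ g h := by
    intro h hh
    have hsplit : Real.exp (-ε^2 * (h + m)^2)
        = Real.exp (-(ε^2 * h^2)) * Real.exp (-(b * h)) * C := by
      rw [hC_def, hb_def, ← Real.exp_add, ← Real.exp_add]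
      ring_nf
    have h1 : ε^2 * h^2 + 1 ≤ Real.exp (ε^2 * h^2) := Real.add_one_le_exp _
    have h2 : (h^2 + 1/ε^2) * Real.exp (-(ε^2 * h^2)) ≤ 1/ε^2 := by
      rw [Real.exp_neg]
      have hinv : (Real.exp (ε^2*h^2))⁻¹ ≤ (ε^2 * h^2 + 1)⁻¹ :=
        inv_anti₀ (by positivity) h1
      calc (h^2 + 1/ε^2) * (Real.exp (ε^2*h^2))⁻¹
          ≤ (h^2 + 1/ε^2) * (ε^2 * h^2 + 1)⁻¹ :=
            mul_le_mul_of_nonneg_left hinv (by positivity)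
        _ = 1/ε^2 := by
            rw [mul_inv_eq_iff_eq_mul₀ (by positivity)]
            field_simp
    have h3 : f h + c h = (h^2 + 1/ε^2) * Real.exp (-(ε^2 * h^2))
        * (Real.exp (-(b * h)) * C) := by
      simp only [hf_def, hc_def]
      rw [hsplit]; ring
    rw [h3, hg_def]
    have h4 : (h^2 + 1/ε^2) * Real.exp (-(ε^2*h^2)) * (Real.exp (-(b*h)) * C)
        ≤ 1/ε^2 * (Real.exp (-(b*h)) * C) :=
      mul_le_mul_of_nonneg_right h2 (by positivity)
    calc (h^2 + 1/ε^2) * Real.exp (-(ε^2*h^2)) * (Real.exp (-(b*h)) * C)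
        ≤ 1/ε^2 * (Real.exp (-(b*h)) * C) := h4
      _ = 1/ε^2 * C * Real.exp (-(b*h)) := by ring
  -- integrability
  have hg_int : IntegrableOn g (Set.Ioi (0:ℝ)) := by
    have := (exp_neg_integrableOn_Ioi 0 hb).const_mul (1/ε^2 * C)
    simpa [hg_def, neg_mul, mul_assoc, IntegrableOn] using this
  have hc_int : IntegrableOn c (Set.Ioi (0:ℝ)) := by
    have h0 : Integrable (fun h : ℝ => Real.exp (-ε^2 * h^2)) :=
      integrable_exp_neg_mul_sq (by positivity)
    have h1 : Integrable (fun h : ℝ => Real.exp (-ε^2 * (h + m)^2)) := by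
      have := h0.comp_add_right m
      simpa using this
    exact ((h1.const_mul (1/ε^2)).integrableOn)
  have hf_meas : AEStronglyMeasurable f (volume.restrict (Set.Ioi (0:ℝ))) := by
    apply Continuous.aestronglyMeasurable
    continuity
  have hf_int : IntegrableOn f (Set.Ioi (0:ℝ)) := by
    apply Integrable.mono' hg_int hf_meas
    filter_upwards [ae_restrict_mem measurableSet_Ioi] with h hh
    have hh' : (0:ℝ) ≤ h := le_of_lt hh
    have hcpos : 0 ≤ c h := by positivity
    have hfpos : 0 ≤ f h := by positivity
    rw [Real.norm_of_nonneg hfpos]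
    linarith [key h hh']
  -- integral comparison
  have step1 : (∫ h in Set.Ioi (0:ℝ), f h) + (∫ h in Set.Ioi (0:ℝ), c h)
      ≤ ∫ h in Set.Ioi (0:ℝ), g h := by
    rw [← integral_add hf_int hc_int]
    apply setIntegral_mono_on (hf_int.add hc_int) hg_int measurableSet_Ioi
    intro h hh
    exact key h (le_of_lt hh)
  have hcpos : 0 < ∫ h in Set.Ioi (0:ℝ), c h := by
    rw [setIntegral_pos_iff_support_of_nonneg_ae _ hc_int]
    · have : Function.support c = Set.univ := by
        ext h
        simp only [Function.mem_support, hc_def, Set.mem_univ, iff_true]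
        positivity
      rw [this]
      simpa using measure_Ioi_pos (volume : Measure ℝ) (a := (0:ℝ)) -- may need fix
    · filter_upwards with h
      have : 0 ≤ c h := by positivity
      exact this
  have hg_val : (∫ h in Set.Ioi (0:ℝ), g h) = C / (2 * ε^4 * m) := by
    rw [hg_def, integral_const_mul, exp_decay_integral b hb, hb_def,
      eq_div_iff (by positivity : (2 * ε^4 * m) ≠ 0)]
    field_simp
  have := lt_of_lt_of_le (by linarith : (∫ h in Set.Ioi (0:ℝ), f h)
      < (∫ h in Set.Ioi (0:ℝ), f h) + (∫ h in Set.Ioi (0:ℝ), c h)) step1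
  rw [hg_val] at this
  exact this
end

section
/- Let ε > 0, a > 0, and c ≥ 0. Then Σ_{n=1}^{∞} (n+c)²·e^{-ε²(n+c+a)²} ≤ e^{-ε²a²}/(2·ε⁴·a) + sup_{h ≥ 1+c} h²·e^{-ε²(h+a)²}. -/
open Real Set Finset

noncomputable def s16g (ε a : ℝ) : ℝ → ℝ := fun h => h^2 * Real.exp (-ε^2 * (h + a)^2)
noncomputable def s16G (ε a : ℝ) : ℝ → ℝ := fun h =>
  (h/(2*ε^2) + 1/(4*ε^4*a)) * Real.exp (-ε^2 * (h + a)^2)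

lemma s16g_deriv (ε a h : ℝ) :
    HasDerivAt (s16g ε a) (Real.exp (-ε^2 * (h + a)^2) * (2*h) * (1 - ε^2*h*(h+a))) h := by
  have h1 : HasDerivAt (fun h : ℝ => -ε^2 * (h + a)^2) (-ε^2 * (2*(h+a))) h := by
    have := ((hasDerivAt_id h).add_const a).pow 2
    simpa using this.const_mul (-ε^2)
  have h2 : HasDerivAt (fun h : ℝ => Real.exp (-ε^2 * (h + a)^2))
      (Real.exp (-ε^2 * (h + a)^2) * (-ε^2 * (2*(h+a)))) h := by
    simpa [mul_comm] using h1.exp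
  have h3 : HasDerivAt (s16g ε a) _ h := ((hasDerivAt_pow 2 h).mul h2)
  convert h3 using 1
  ring

lemma s16G_deriv (ε a h : ℝ) (hε : ε ≠ 0) (ha : a ≠ 0) :
    HasDerivAt (s16G ε a) (-(Real.exp (-ε^2 * (h + a)^2) * h * (h + a + 1/(2*ε^2*a)))) h := by
  have h1 : HasDerivAt (fun h : ℝ => -ε^2 * (h + a)^2) (-ε^2 * (2*(h+a))) h := by
    have := ((hasDerivAt_id h).add_const a).pow 2
    simpa using this.const_mul (-ε^2)
  have h2 : HasDerivAt (fun h : ℝ => Real.exp (-ε^2 * (h + a)^2))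
      (Real.exp (-ε^2 * (h + a)^2) * (-ε^2 * (2*(h+a)))) h := by
    simpa [mul_comm] using h1.exp
  have h4 : HasDerivAt (fun h : ℝ => h/(2*ε^2) + 1/(4*ε^4*a)) (1/(2*ε^2)) h := by
    exact ((hasDerivAt_id h).div_const (2*ε^2)).add_const (1/(4*ε^4*a)) |>.congr_deriv (by simp)
  have h3 : HasDerivAt (s16G ε a) _ h := h4.mul h2
  convert h3 using 1
  field_simp
  ring

lemma s16g_mono (ε a u v : ℝ) (ha : 0 < a) (hu : 0 ≤ u)
    (hv : ε^2 * v * (v + a) ≤ 1) : MonotoneOn (s16g ε a) (Set.Icc u v) := by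
  rcases le_or_gt v u with h | huv
  · intro x hx y hy hxy
    have : x = y := le_antisymm hxy (hy.2.trans (h.trans hx.1))
    simp [this]
  apply monotoneOn_of_deriv_nonneg (convex_Icc u v)
  · exact fun x _ => ((s16g_deriv ε a x).continuousAt).continuousWithinAt
  · intro x _
    exact ((s16g_deriv ε a x).differentiableAt).differentiableWithinAt
  · intro x hx
    rw [interior_Icc] at hx
    rw [(s16g_deriv ε a x).deriv]
    have hx0 : 0 ≤ x := hu.trans hx.1.le
    have hψ : ε^2 * x * (x + a) ≤ 1 := by
      nlinarith [hx.2.le, mul_nonneg (mul_nonneg (sq_nonneg ε) (sub_nonneg.2 hx.2.le))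
        (show (0:ℝ) ≤ v + x + a by linarith [hx.2.le])]
    have hE := Real.exp_pos (-ε^2 * (x + a)^2)
    have : 0 ≤ (2*x) * (1 - ε^2*x*(x+a)) := mul_nonneg (by linarith) (by linarith)
    calc (0:ℝ) ≤ Real.exp (-ε^2 * (x + a)^2) * ((2*x) * (1 - ε^2*x*(x+a))) :=
          mul_nonneg hE.le this
      _ = _ := by ring

lemma s16g_anti (ε a u v : ℝ) (ha : 0 < a) (hu : 0 ≤ u)
    (hv : 1 ≤ ε^2 * u * (u + a)) : AntitoneOn (s16g ε a) (Set.Icc u v) := by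
  apply antitoneOn_of_deriv_nonpos (convex_Icc u v)
  · exact fun x _ => ((s16g_deriv ε a x).continuousAt).continuousWithinAt
  · intro x _
    exact ((s16g_deriv ε a x).differentiableAt).differentiableWithinAt
  · intro x hx
    rw [interior_Icc] at hx
    rw [(s16g_deriv ε a x).deriv]
    have hx0 : 0 ≤ x := hu.trans hx.1.le
    have hψ : 1 ≤ ε^2 * x * (x + a) := by
      nlinarith [hx.1.le, mul_nonneg (mul_nonneg (sq_nonneg ε) (sub_nonneg.2 hx.1.le))
        (show (0:ℝ) ≤ x + u + a by linarith [hx.1.le])]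
    have hE := Real.exp_pos (-ε^2 * (x + a)^2)
    have h0 : (2*x) * (1 - ε^2*x*(x+a)) ≤ 0 :=
      mul_nonpos_of_nonneg_of_nonpos (by linarith) (by linarith)
    calc Real.exp (-ε^2 * (x + a)^2) * (2*x) * (1 - ε^2*x*(x+a))
        = Real.exp (-ε^2 * (x + a)^2) * ((2*x) * (1 - ε^2*x*(x+a))) := by ring
      _ ≤ 0 := mul_nonpos_of_nonneg_of_nonpos hE.le h0

/-- key interval lemma: if `K0 ≤ g` on `[u,v] ⊆ [0,∞)` then `K0*(v-u) ≤ G u - G v`. -/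
lemma s16key (ε a u v K0 : ℝ) (hε : 0 < ε) (ha : 0 < a) (hu : 0 ≤ u) (huv : u ≤ v)
    (hK : ∀ h ∈ Set.Icc u v, K0 ≤ s16g ε a h) :
    K0 * (v - u) ≤ s16G ε a u - s16G ε a v := by
  have hH : ∀ h : ℝ, HasDerivAt (fun x => s16G ε a x + K0 * x)
      (-(Real.exp (-ε^2 * (h + a)^2) * h * (h + a + 1/(2*ε^2*a))) + K0) h := by
    intro h
    exact (s16G_deriv ε a h (ne_of_gt hε) (ne_of_gt ha)).add ((hasDerivAt_id h).const_mul K0)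
      |>.congr_deriv (by ring)
  have hanti : AntitoneOn (fun x => s16G ε a x + K0 * x) (Set.Icc u v) := by
    apply antitoneOn_of_deriv_nonpos (convex_Icc u v)
    · exact fun x _ => ((hH x).continuousAt).continuousWithinAt
    · exact fun x _ => ((hH x).differentiableAt).differentiableWithinAt
    · intro x hx
      rw [interior_Icc] at hx
      rw [(hH x).deriv]
      have hx0 : 0 ≤ x := hu.trans hx.1.le
      have h1 : K0 ≤ s16g ε a x := hK x ⟨hx.1.le, hx.2.le⟩
      have h2 : s16g ε a x ≤ Real.exp (-ε^2 * (x + a)^2) * x * (x + a + 1/(2*ε^2*a)) := by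
        have hE := (Real.exp_pos (-ε^2 * (x + a)^2)).le
        have hpos : (0:ℝ) < 1/(2*ε^2*a) := by positivity
        simp only [s16g]
        nlinarith [mul_nonneg (mul_nonneg hE hx0)
          (show (0:ℝ) ≤ a + 1/(2*ε^2*a) by positivity)]
      linarith
  have := hanti (Set.left_mem_Icc.2 huv) (Set.right_mem_Icc.2 huv) huv
  simp only at this
  linarith

lemma s16G_nonneg (ε a h : ℝ) (hε : 0 < ε) (ha : 0 < a) (hh : 0 ≤ h) : 0 ≤ s16G ε a h := by
  have : (0:ℝ) < 1/(4*ε^4*a) := by positivity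
  have := (Real.exp_pos (-ε^2 * (h + a)^2)).le
  have : 0 ≤ h/(2*ε^2) := by positivity
  simp only [s16G]
  positivity

lemma s16g_le_sup (ε a : ℝ) (hε : 0 < ε) (ha : 0 < a) (h : ℝ) (hh : 1 ≤ h) :
    s16g ε a h ≤ 1/ε^2 := by
  have h0 : (0:ℝ) < h := lt_of_lt_of_le one_pos hh
  have e1 : Real.exp (-ε^2 * (h + a)^2) ≤ Real.exp (-(ε^2 * h^2)) := by
    apply Real.exp_le_exp.2
    nlinarith [mul_nonneg (sq_nonneg ε) (show (0:ℝ) ≤ 2*a*h + a^2 by nlinarith)]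
  have e2 : ε^2 * h^2 + 1 ≤ Real.exp (ε^2 * h^2) := by
    have := Real.add_one_le_exp (ε^2 * h^2); linarith
  have step1 : s16g ε a h ≤ h^2 * Real.exp (-(ε^2 * h^2)) :=
    mul_le_mul_of_nonneg_left e1 (sq_nonneg h)
  have step2 : h^2 * Real.exp (-(ε^2 * h^2)) ≤ 1/ε^2 := by
    rw [le_div_iff₀ (by positivity : (0:ℝ) < ε^2)]
    calc h^2 * Real.exp (-(ε^2 * h^2)) * ε^2
        = (ε^2 * h^2) * Real.exp (-(ε^2 * h^2)) := by ring
      _ ≤ Real.exp (ε^2 * h^2) * Real.exp (-(ε^2 * h^2)) :=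
          mul_le_mul_of_nonneg_right (by linarith) (Real.exp_pos _).le
      _ = 1 := by rw [← Real.exp_add]; simp
  exact step1.trans step2

lemma s16G_le (ε a c : ℝ) (hε : 0 < ε) (ha : 0 < a) (hc : 0 ≤ c) :
    s16G ε a (1+c) ≤ Real.exp (-ε^2 * a^2) / (2 * ε^4 * a) := by
  set w : ℝ := 1 + c with hw
  have hw1 : (1:ℝ) ≤ w := by simp [hw]; linarith
  set v : ℝ := ε^2 * a * w with hv
  have hv0 : (0:ℝ) < v := by rw [hv]; positivity
  have e2 : 2*v + 1 ≤ Real.exp (2*v) := by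
    have := Real.add_one_le_exp (2*v); linarith
  have e1 : Real.exp (-ε^2 * (w + a)^2) * Real.exp (2*v) ≤ Real.exp (-ε^2 * a^2) := by
    rw [← Real.exp_add]
    apply Real.exp_le_exp.2
    rw [hv]
    nlinarith [mul_nonneg (sq_nonneg ε) (sq_nonneg w), sq_nonneg ε]
  have hX : (0:ℝ) < Real.exp (-ε^2 * (w + a)^2) := Real.exp_pos _
  have key : (2*v + 1) * Real.exp (-ε^2 * (w + a)^2) ≤ 2 * Real.exp (-ε^2 * a^2) := by
    have h1 : (2*v + 1) * Real.exp (-ε^2 * (w + a)^2)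
        ≤ Real.exp (2*v) * Real.exp (-ε^2 * (w + a)^2) :=
      mul_le_mul_of_nonneg_right e2 hX.le
    have h2 := Real.exp_pos (-ε^2 * a^2)
    nlinarith [e1]
  show (w/(2*ε^2) + 1/(4*ε^4*a)) * Real.exp (-ε^2 * (w + a)^2)
      ≤ Real.exp (-ε^2 * a^2) / (2 * ε^4 * a)
  have hrw : w/(2*ε^2) + 1/(4*ε^4*a) = (2*v + 1)/(4*ε^4*a) := by
    rw [hv]; field_simp; ring
  rw [hrw, div_mul_eq_mul_div, div_le_div_iff₀ (by positivity) (by positivity)]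
  nlinarith [mul_le_mul_of_nonneg_right key (show (0:ℝ) ≤ 2*ε^4*a by positivity)]

/-- Combined Appendix B estimate for the error terms `δS'_r`:
`Σ_{n≥1} (n+c)² e^{-ε²(n+c+a)²} ≤ e^{-ε²a²}/(2ε⁴a) + sup_{h ≥ 1+c} h² e^{-ε²(h+a)²}`. -/
theorem stmt16 (ε a c : ℝ) (hε : 0 < ε) (ha : 0 < a) (hc : 0 ≤ c) :
    ∑' n : ℕ, ((n : ℝ) + 1 + c)^2 * Real.exp (-ε^2 * ((n : ℝ) + 1 + c + a)^2)
      ≤ Real.exp (-ε^2 * a^2) / (2 * ε^4 * a)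
        + sSup ((fun h : ℝ => h^2 * Real.exp (-ε^2 * (h + a)^2)) '' Set.Ici (1 + c)) := by
  set t : ℕ → ℝ := fun n => (n : ℝ) + 1 + c with ht
  set f : ℕ → ℝ := fun n => s16g ε a (t n) with hf
  set M : ℝ := sSup ((fun h : ℝ => h^2 * Real.exp (-ε^2 * (h + a)^2)) '' Set.Ici (1 + c)) with hM
  set B : ℝ := Real.exp (-ε^2 * a^2) / (2 * ε^4 * a) with hB
  -- basic facts about t
  have ht0 : ∀ n : ℕ, (0:ℝ) ≤ t n := by
    intro n; simp only [ht]; positivity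
  have ht1c : ∀ n : ℕ, 1 + c ≤ t n := by
    intro n; simp only [ht]; have : (0:ℝ) ≤ (n:ℝ) := Nat.cast_nonneg n; linarith
  have htmono : ∀ m n : ℕ, m ≤ n → t m ≤ t n := by
    intro m n h; simp only [ht]; have : (m:ℝ) ≤ (n:ℝ) := Nat.cast_le.2 h; linarith
  have htsucc : ∀ n : ℕ, t (n+1) = t n + 1 := by
    intro n; simp only [ht]; push_cast; ring
  -- sup facts
  have hbdd : BddAbove ((fun h : ℝ => h^2 * Real.exp (-ε^2 * (h + a)^2)) '' Set.Ici (1 + c)) := by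
    refine ⟨1/ε^2, ?_⟩
    rintro y ⟨h, hh, rfl⟩
    exact s16g_le_sup ε a hε ha h (by have := Set.mem_Ici.1 hh; linarith)
  have hfM : ∀ n : ℕ, f n ≤ M := by
    intro n
    exact le_csSup hbdd ⟨t n, Set.mem_Ici.2 (ht1c n), rfl⟩
  have hf0 : ∀ n : ℕ, 0 ≤ f n := by
    intro n; simp only [hf, s16g]; positivity
  have hM0 : 0 ≤ M := (hf0 0).trans (hfM 0)
  -- N
  have hex : ∃ n : ℕ, 1 ≤ ε^2 * t n * (t n + a) := by
    obtain ⟨n, hn⟩ := exists_nat_ge (1/(ε^2 * a))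
    refine ⟨n, ?_⟩
    have h1 : 1 ≤ (n:ℝ) * (ε^2 * a) := (div_le_iff₀ (by positivity)).1 hn
    have h2 : (n:ℝ) ≤ t n := by simp only [ht]; linarith
    have h3 : (0:ℝ) ≤ (n:ℝ) := Nat.cast_nonneg n
    have h4 : (n:ℝ)*(ε^2*a) ≤ t n * (ε^2*a) := mul_le_mul_of_nonneg_right h2 (by positivity)
    have h5 : ε^2 * t n * a ≤ ε^2 * t n * (t n + a) :=
      mul_le_mul_of_nonneg_left (by linarith [ht0 n]) (by positivity)
    nlinarith [h4, h5]
  set N : ℕ := Nat.find hex with hN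
  have hN1 : 1 ≤ ε^2 * t N * (t N + a) := Nat.find_spec hex
  have hNmin : ∀ k : ℕ, k < N → ε^2 * t k * (t k + a) < 1 := by
    intro k hk
    have := Nat.find_min hex hk
    linarith [not_le.1 this]
  have hNge : ∀ n : ℕ, N ≤ n → 1 ≤ ε^2 * t n * (t n + a) := by
    intro n hn
    have h1 := htmono N n hn
    have h2 : t N * (t N + a) ≤ t n * (t n + a) := by
      nlinarith [mul_nonneg (sub_nonneg.2 h1) (show (0:ℝ) ≤ t n + t N + a by
        linarith [ht0 n, ht0 N])]
    nlinarith [mul_le_mul_of_nonneg_left h2 (sq_nonneg ε)]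
  -- b and σ
  set b : ℕ := if N = 0 then 0 else if s16g ε a (t N) ≤ s16g ε a (t (N-1)) then N-1 else N with hb
  set σ : ℕ → ℕ := fun n => if n < b then n else n - 1 with hσ
  set D : ℕ → ℝ := fun k => s16G ε a (t k) - s16G ε a (t (k+1)) with hD
  have hbub : b ≤ N := by simp only [hb]; split_ifs <;> omega
  have hblb : N - 1 ≤ b := by simp only [hb]; split_ifs <;> omega
  have hD0 : ∀ k : ℕ, 0 ≤ D k := by
    intro k
    have := s16key ε a (t k) (t (k+1)) 0 hε ha (ht0 k) (by rw [htsucc]; linarith)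
      (fun h _ => by simp only [s16g]; positivity)
    simp only [hD]
    nlinarith [this]
  -- the per-term bound
  have hterm : ∀ n : ℕ, n ≠ b → f n ≤ D (σ n) := by
    intro n hn
    by_cases h1 : n + 1 < N
    · -- increasing case
      have hσn : σ n = n := by simp only [hσ]; rw [if_pos (by omega)]
      rw [hσn]
      have hmono := s16g_mono ε a (t n) (t (n+1)) ha (ht0 n) (le_of_lt (hNmin (n+1) h1))
      have hK : ∀ h ∈ Set.Icc (t n) (t (n+1)), f n ≤ s16g ε a h := by
        intro h hh
        exact hmono (Set.left_mem_Icc.2 (by rw [htsucc]; linarith)) hh hh.1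
      have := s16key ε a (t n) (t (n+1)) (f n) hε ha (ht0 n) (by rw [htsucc]; linarith) hK
      rw [show t (n+1) - t n = 1 by rw [htsucc]; ring, mul_one] at this
      simp only [hD]
      linarith
    · by_cases h2 : N < n
      · -- decreasing case
        have hn1 : 1 ≤ n := by omega
        have hσn : σ n = n - 1 := by simp only [hσ]; rw [if_neg (by omega)]
        rw [hσn]
        have hanti := s16g_anti ε a (t (n-1)) (t n) ha (ht0 (n-1)) (hNge (n-1) (by omega))
        have hle : t (n-1) ≤ t n := htmono (n-1) n (by omega)
        have hK : ∀ h ∈ Set.Icc (t (n-1)) (t n), f n ≤ s16g ε a h := by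
          intro h hh
          exact hanti hh (Set.right_mem_Icc.2 hle) hh.2
        have := s16key ε a (t (n-1)) (t n) (f n) hε ha (ht0 (n-1)) hle hK
        have heq : n - 1 + 1 = n := by omega
        have hgap : t n - t (n-1) = 1 := by
          have h := htsucc (n-1); rw [heq] at h; rw [h]; ring
        rw [hgap, mul_one] at this
        simp only [hD, heq]
        linarith
      · -- the min cases: n = N-1 or n = N, n ≠ b
        have hNn : n = N - 1 ∨ n = N := by omega
        have hNpos : 1 ≤ N := by
          by_contra h
          have : N = 0 := by omega
          have : b = 0 := by simp only [hb, this]; simp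
          omega
        have hle : t (N-1) ≤ t N := htmono (N-1) N (by omega)
        have heq : N - 1 + 1 = N := by omega
        -- min facts
        have hmm : f n ≤ s16g ε a (t (N-1)) ∧ f n ≤ s16g ε a (t N) := by
          rcases hNn with h | h
          · -- n = N-1 ≠ b forces b = N, i.e. g(t(N-1)) < g(t N)
            have hbor : b = N - 1 ∨ b = N := by omega
            have hbN : b = N := by
              rcases hbor with h' | h'
              · exact absurd (by omega : n = b) hn
              · exact h'
            have hlt : s16g ε a (t (N-1)) < s16g ε a (t N) := by
              by_contra hcon
              push_neg at hcon
              have : b = N - 1 := by rw [hb, if_neg (by omega), if_pos hcon]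
              omega
            constructor
            · simp only [hf, h]; exact le_rfl
            · simp only [hf, h]; linarith
          · -- n = N ≠ b forces b = N-1, i.e. g(t N) ≤ g(t(N-1))
            have hcmp : s16g ε a (t N) ≤ s16g ε a (t (N-1)) := by
              by_contra hcon
              have : b = N := by rw [hb, if_neg (by omega), if_neg hcon]
              exact hn (by omega)
            constructor
            · simp only [hf, h]; linarith
            · simp only [hf, h]; exact le_rfl
        have hσn : σ n = N - 1 := by
          rcases hNn with h | h
          · simp only [hσ, h]; rw [if_pos (by omega)]
          · simp only [hσ, h]; rw [if_neg (by omega)]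
        rw [hσn]
        have hK : ∀ h ∈ Set.Icc (t (N-1)) (t N), f n ≤ s16g ε a h := by
          intro h hh
          by_cases hψ : ε^2 * h * (h + a) ≤ 1
          · have hmono := s16g_mono ε a (t (N-1)) h ha (ht0 (N-1)) hψ
            exact hmm.1.trans (hmono (Set.left_mem_Icc.2 hh.1) ⟨hh.1, le_rfl⟩ hh.1)
          · have hanti := s16g_anti ε a h (t N) ha ((ht0 (N-1)).trans hh.1)
              (le_of_lt (not_le.1 hψ))
            exact hmm.2.trans (hanti ⟨le_rfl, hh.2⟩ ⟨hh.2, le_rfl⟩ hh.2)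
        have := s16key ε a (t (N-1)) (t N) (f n) hε ha (ht0 (N-1)) hle hK
        have hgap : t N - t (N-1) = 1 := by
          have h := htsucc (N-1); rw [heq] at h; rw [h]; ring
        rw [hgap, mul_one] at this
        simp only [hD, heq]
        linarith
  -- partial sums bound
  have hrange : ∀ K : ℕ, ∑ n ∈ Finset.range K, f n ≤ B + M := by
    intro K
    have hinj : ∀ x ∈ (Finset.range K).erase b, ∀ y ∈ (Finset.range K).erase b,
        σ x = σ y → x = y := by
      intro x hx y hy hxy
      have hxb : x ≠ b := Finset.ne_of_mem_erase hx
      have hyb : y ≠ b := Finset.ne_of_mem_erase hy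
      simp only [hσ] at hxy
      split_ifs at hxy <;> omega
    have hsub : ((Finset.range K).erase b).image σ ⊆ Finset.range K := by
      intro k hk
      simp only [Finset.mem_image, Finset.mem_erase, Finset.mem_range] at hk ⊢
      obtain ⟨n, ⟨hnb, hnK⟩, rfl⟩ := hk
      simp only [hσ]; split_ifs <;> omega
    have hsum1 : ∑ n ∈ (Finset.range K).erase b, f n
        ≤ ∑ n ∈ (Finset.range K).erase b, D (σ n) :=
      Finset.sum_le_sum (fun n hn => hterm n (Finset.ne_of_mem_erase hn))
    have hsum2 : ∑ n ∈ (Finset.range K).erase b, D (σ n)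
        = ∑ k ∈ ((Finset.range K).erase b).image σ, D k :=
      (Finset.sum_image hinj).symm
    have hsum3 : ∑ k ∈ ((Finset.range K).erase b).image σ, D k
        ≤ ∑ k ∈ Finset.range K, D k :=
      Finset.sum_le_sum_of_subset_of_nonneg hsub (fun k _ _ => hD0 k)
    have htel : ∑ k ∈ Finset.range K, D k = s16G ε a (t 0) - s16G ε a (t K) :=
      Finset.sum_range_sub' (fun k => s16G ε a (t k)) K
    have hGK : 0 ≤ s16G ε a (t K) := s16G_nonneg ε a (t K) hε ha (ht0 K)
    have hG0 : s16G ε a (t 0) ≤ B := by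
      have : t 0 = 1 + c := by simp [ht]
      rw [this, hB]
      exact s16G_le ε a c hε ha hc
    have herase : ∑ n ∈ (Finset.range K).erase b, f n ≤ B := by
      calc ∑ n ∈ (Finset.range K).erase b, f n
          ≤ ∑ k ∈ Finset.range K, D k := by rw [← hsum2] at hsum3; linarith
        _ = s16G ε a (t 0) - s16G ε a (t K) := htel
        _ ≤ B := by linarith
    by_cases hbK : b ∈ Finset.range K
    · have := Finset.add_sum_erase (Finset.range K) f hbK
      calc ∑ n ∈ Finset.range K, f n
          = f b + ∑ n ∈ (Finset.range K).erase b, f n := this.symm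
        _ ≤ M + B := add_le_add (hfM b) herase
        _ = B + M := by ring
    · rw [← Finset.erase_eq_of_notMem hbK]
      linarith
  exact Real.tsum_le_of_sum_range_le hf0 hrange
end

section
/- Let ε > 0, λ₀ ∈ ℝ, θ ∈ ℝ, k ∈ ℤ, and let H : ℤ → ℂ satisfy |H(n)| ≤ C·(1+|n|)^d for some constants C ≥ 0 and d ∈ ℕ. Define Ψ : ℤ → ℂ by Ψ(n) = exp(-ε²(n-λ₀)²/2)·exp(-iθ(n-λ₀)/2). Then the series Σ_{n∈ℤ} conj(Ψ(n+k))·H(n)·Ψ(n) and Σ_{n∈ℤ} H(n)·exp(-ε²(n-λ₀+k/2)²) are absolutely convergent, and Σ_{n∈ℤ} conj(Ψ(n+k))·H(n)·Ψ(n) = e^{ikθ/2}·e^{-ε²k²/4}·Σ_{n∈ℤ} H(n)·e^{-ε²(n-λ₀+k/2)²}. -/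
open Real

lemma aux_gauss_summable (ε b : ℝ) (hε : 0 < ε) (d : ℕ) :
    Summable (fun n : ℤ => (1 + |(n : ℝ)|)^d * Real.exp (-(ε^2) * ((n : ℝ) + b)^2)) := by
  have hT : 0 < ε^2 / π := by positivity
  have key : ∀ j : ℕ,
      Summable (fun n : ℤ => |(n : ℝ)|^j * Real.exp (-(ε^2) * ((n : ℝ) + b)^2)) := by
    intro j
    have hsum := (summable_pow_mul_jacobiTheta₂_term_bound (ε^2 * |b| / π) hT j).mul_right
      (Real.exp (ε^2 * b^2))
    refine Summable.of_nonneg_of_le ?_ ?_ hsum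
    · intro n; positivity
    intro n
    rw [mul_assoc, ← Real.exp_add, Int.cast_abs]
    refine mul_le_mul_of_nonneg_left ?_ (by positivity : (0:ℝ) ≤ |(n:ℝ)|^j)
    rw [Real.exp_le_exp]
    have hπ : (0:ℝ) < π := Real.pi_pos
    have h1 : -π * (ε^2/π * (n:ℝ)^2 - 2 * (ε^2 * |b| / π) * |(n:ℝ)|) + ε^2 * b^2
        = -(ε^2) * (n:ℝ)^2 + 2 * ε^2 * |b| * |(n:ℝ)| + ε^2 * b^2 := by
      field_simp; ring
    rw [h1]
    nlinarith [mul_le_mul_of_nonneg_left (neg_abs_le ((n:ℝ)*b)) (sq_nonneg ε),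
      abs_mul (n:ℝ) b]
  refine (summable_sum (s := Finset.range (d+1))
    (fun j _ => ((key (d - j)).mul_left ((d.choose j : ℝ))))).congr (fun n => ?_)
  conv_rhs => rw [add_pow]
  rw [Finset.sum_mul]
  exact Finset.sum_congr rfl (fun j hj => by ring)

/-- One-dimensional factor of the coherent-state matrix element (Eq. (C2)):
for the Gaussian coherent state `Ψ(n) = e^{-ε²(n-lam₀)²/2} e^{-iθ(n-lam₀)/2}` on the polymer
Hilbert space and a polynomially bounded `H : ℤ → ℂ`, the series
`Σ_n conj(Ψ(n+k)) H(n) Ψ(n)` converges absolutely and equals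
`e^{ikθ/2} e^{-ε²k²/4} Σ_n H(n) e^{-ε²(n-lam₀+k/2)²}`. -/
theorem stmt17 (ε lam₀ θ : ℝ) (hε : 0 < ε) (k : ℤ) (H : ℤ → ℂ)
    (C : ℝ) (hC : 0 ≤ C) (d : ℕ)
    (hH : ∀ n : ℤ, ‖H n‖ ≤ C * (1 + |(n : ℝ)|)^d)
    (Ψ : ℤ → ℂ)
    (hΨ : ∀ n : ℤ, Ψ n =
      Complex.exp (-(ε^2 : ℂ) * ((n : ℂ) - (lam₀ : ℂ))^2 / 2) *
      Complex.exp (-Complex.I * (θ : ℂ) * ((n : ℂ) - (lam₀ : ℂ)) / 2)) :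
    Summable (fun n : ℤ => (starRingEnd ℂ) (Ψ (n + k)) * H n * Ψ n) ∧
    Summable (fun n : ℤ => H n * Complex.exp (-(ε^2 : ℂ) * ((n : ℂ) - (lam₀ : ℂ) + (k : ℂ)/2)^2)) ∧
    ∑' n : ℤ, (starRingEnd ℂ) (Ψ (n + k)) * H n * Ψ n
      = Complex.exp (Complex.I * (k : ℂ) * (θ : ℂ) / 2) *
        Complex.exp (-(ε^2 : ℂ) * (k : ℂ)^2 / 4) *
        ∑' n : ℤ, H n * Complex.exp (-(ε^2 : ℂ) * ((n : ℂ) - (lam₀ : ℂ) + (k : ℂ)/2)^2) := by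
  set b : ℝ := (k : ℝ)/2 - lam₀ with hb
  -- the complex exponent is real
  have hcast : ∀ n : ℤ, (-(ε^2 : ℂ) * ((n : ℂ) - (lam₀ : ℂ) + (k : ℂ)/2)^2)
      = ((-(ε^2) * ((n : ℝ) + b)^2 : ℝ) : ℂ) := by
    intro n; rw [hb]; push_cast; ring
  -- summability of the second series
  have h2 : Summable (fun n : ℤ =>
      H n * Complex.exp (-(ε^2 : ℂ) * ((n : ℂ) - (lam₀ : ℂ) + (k : ℂ)/2)^2)) := by
    refine Summable.of_norm ?_
    refine Summable.of_nonneg_of_le (fun n => norm_nonneg _) (fun n => ?_)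
      ((aux_gauss_summable ε b hε d).mul_left C)
    rw [norm_mul, hcast n, ← Complex.ofReal_exp, Complex.norm_real,
      Real.norm_eq_abs, abs_of_pos (Real.exp_pos _), ← mul_assoc]
    exact mul_le_mul_of_nonneg_right (hH n) (Real.exp_pos _).le
  -- pointwise identity
  have hpoint : ∀ n : ℤ, (starRingEnd ℂ) (Ψ (n + k)) * H n * Ψ n
      = (Complex.exp (Complex.I * (k : ℂ) * (θ : ℂ) / 2) *
         Complex.exp (-(ε^2 : ℂ) * (k : ℂ)^2 / 4)) *
        (H n * Complex.exp (-(ε^2 : ℂ) * ((n : ℂ) - (lam₀ : ℂ) + (k : ℂ)/2)^2)) := by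
    intro n
    rw [hΨ, hΨ, map_mul, ← Complex.exp_conj, ← Complex.exp_conj]
    have e1 : (starRingEnd ℂ) (-(ε^2 : ℂ) * (((n + k : ℤ) : ℂ) - (lam₀ : ℂ))^2 / 2)
        = -(ε^2 : ℂ) * ((n : ℂ) + (k : ℂ) - (lam₀ : ℂ))^2 / 2 := by
      have : (-(ε^2 : ℂ) * (((n + k : ℤ) : ℂ) - (lam₀ : ℂ))^2 / 2)
          = ((-(ε^2) * (((n : ℝ) + (k : ℝ)) - lam₀)^2 / 2 : ℝ) : ℂ) := by push_cast; ring
      rw [this, Complex.conj_ofReal]; push_cast; ring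
    have e2 : (starRingEnd ℂ) (-Complex.I * (θ : ℂ) * (((n + k : ℤ) : ℂ) - (lam₀ : ℂ)) / 2)
        = Complex.I * (θ : ℂ) * ((n : ℂ) + (k : ℂ) - (lam₀ : ℂ)) / 2 := by
      simp only [map_div₀, map_mul, map_neg, Complex.conj_I, map_intCast,
        map_sub, Complex.conj_ofReal, map_ofNat]
      push_cast; ring
    rw [e1, e2]
    have key : Complex.exp (-(ε^2 : ℂ) * ((n : ℂ) + (k : ℂ) - (lam₀ : ℂ))^2 / 2) *
        Complex.exp (Complex.I * (θ : ℂ) * ((n : ℂ) + (k : ℂ) - (lam₀ : ℂ)) / 2) *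
        (Complex.exp (-(ε^2 : ℂ) * ((n : ℂ) - (lam₀ : ℂ))^2 / 2) *
         Complex.exp (-Complex.I * (θ : ℂ) * ((n : ℂ) - (lam₀ : ℂ)) / 2))
        = Complex.exp (Complex.I * (k : ℂ) * (θ : ℂ) / 2) *
          Complex.exp (-(ε^2 : ℂ) * (k : ℂ)^2 / 4) *
          Complex.exp (-(ε^2 : ℂ) * ((n : ℂ) - (lam₀ : ℂ) + (k : ℂ)/2)^2) := by
      simp only [← Complex.exp_add]
      congr 1
      ring
    linear_combination (H n) * key
  have h1 : Summable (fun n : ℤ => (starRingEnd ℂ) (Ψ (n + k)) * H n * Ψ n) := by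
    refine (h2.mul_left _).congr (fun n => (hpoint n).symm)
  refine ⟨h1, h2, ?_⟩
  rw [tsum_congr hpoint, tsum_mul_left]
end
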